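/- arXiv:math/0307403 — 8 statements merged into one kernel-verified Lean document; each statement's English description precedes it below -/
import Mathlib

section
/- A leaf of a simplicial complex has a free vertex; that is, if F is a leaf of a simplicial complex Δ with more than one facet, then F contains a vertex that belongs to no other facet of Δ. -/
open Finset

variable {α : Type*} [DecidableEq α]

/-- A set of vertices meeting every facet. -/
def IsVertexCover (Δ : Finset (Finset α)) (A : Finset α) : Prop :=
  ∀ F ∈ Δ, (A ∩ F).Nonempty

/-- A vertex cover none of whose proper subsets is a cover. -/
def IsMinimalVertexCover (Δ : Finset (Finset α)) (A : Finset α) : Prop :=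
  IsVertexCover Δ A ∧ ∀ B ⊆ A, IsVertexCover Δ B → B = A

/-- The vertex covering number α(Δ). -/
noncomputable def coverNum (Δ : Finset (Finset α)) : ℕ :=
  sInf {n | ∃ A : Finset α, IsVertexCover Δ A ∧ A.card = n}

/-- All minimal vertex covers have the same cardinality. -/
def Unmixed (Δ : Finset (Finset α)) : Prop :=
  ∀ A B : Finset α, IsMinimalVertexCover Δ A → IsMinimalVertexCover Δ B →
    A.card = B.card

/-- `F` is a leaf of `Δ`: it is the only facet, or some facet `G ≠ F`
satisfies `F ∩ F' ⊆ F ∩ G` for every facet `F' ≠ F`. -/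
def IsLeaf (Δ : Finset (Finset α)) (F : Finset α) : Prop :=
  F ∈ Δ ∧ (Δ = {F} ∨ ∃ G ∈ Δ, G ≠ F ∧ ∀ F' ∈ Δ, F' ≠ F → F ∩ F' ⊆ F ∩ G)

/-- `G` is a joint of the leaf `F` in `Δ`. -/
def IsJoint (Δ : Finset (Finset α)) (G F : Finset α) : Prop :=
  F ∈ Δ ∧ G ∈ Δ ∧ G ≠ F ∧ (∀ F' ∈ Δ, F' ≠ F → F ∩ F' ⊆ F ∩ G) ∧
    (F ∩ G).Nonempty

def HasLeaf (Δ : Finset (Finset α)) : Prop := ∃ F, IsLeaf Δ F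

/-- Every nonempty subcollection has a leaf. -/
def IsForest (Δ : Finset (Finset α)) : Prop :=
  ∀ Γ ⊆ Δ, Γ.Nonempty → HasLeaf Γ

/-- Any two facets are linked by a chain of facets with consecutive
nonempty intersections. -/
def ComplexConnected (Δ : Finset (Finset α)) : Prop :=
  ∀ F ∈ Δ, ∀ G ∈ Δ,
    Relation.ReflTransGen (fun A B => A ∈ Δ ∧ B ∈ Δ ∧ (A ∩ B).Nonempty) F G

def IsTree (Δ : Finset (Finset α)) : Prop := ComplexConnected Δ ∧ IsForest Δ

/-- An independent (pairwise disjoint) set of facets of `Δ`. -/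
def IndependentFacets (Δ S : Finset (Finset α)) : Prop :=
  S ⊆ Δ ∧ ∀ F ∈ S, ∀ G ∈ S, F ≠ G → F ∩ G = ∅

/-- The independence number β(Δ). -/
noncomputable def indepNum (Δ : Finset (Finset α)) : ℕ :=
  sSup {n | ∃ S : Finset (Finset α), IndependentFacets Δ S ∧ S.card = n}

/-- An independent set of facets not properly contained in another. -/
def MaximalIndependent (Δ S : Finset (Finset α)) : Prop :=
  IndependentFacets Δ S ∧ ∀ T, IndependentFacets Δ T → S ⊆ T → T = S

/-- `v` is a free vertex of the facet `F`: it belongs to no other facet. -/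
def FreeVertex (Δ : Finset (Finset α)) (v : α) (F : Finset α) : Prop :=
  F ∈ Δ ∧ v ∈ F ∧ ∀ G ∈ Δ, v ∈ G → G = F

/-- The facets form an antichain (they are the maximal faces). -/
def FacetAntichain (Δ : Finset (Finset α)) : Prop :=
  ∀ F ∈ Δ, ∀ G ∈ Δ, F ⊆ G → F = G

/- A leaf `F` is not contained in its witness `G`, since facets form an antichain; a vertex of
`F \ G` is free, because `F` meets every other facet inside `G`. -/

theorem IsLeaf.exists_witness_of_one_lt_card {Δ : Finset (Finset α)} {F : Finset α}
    (hF : IsLeaf Δ F) (hcard : 1 < Δ.card) :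
    ∃ G ∈ Δ, G ≠ F ∧ ∀ F' ∈ Δ, F' ≠ F → F ∩ F' ⊆ F ∩ G := by
  obtain ⟨-, hsingle | hG⟩ := hF
  · simp [hsingle] at hcard
  · exact hG

theorem eq_of_mem_of_not_mem_witness {Δ : Finset (Finset α)} {F G : Finset α}
    (hG : ∀ F' ∈ Δ, F' ≠ F → F ∩ F' ⊆ F ∩ G) {v : α} (hvF : v ∈ F) (hvG : v ∉ G)
    {F' : Finset α} (hF' : F' ∈ Δ) (hvF' : v ∈ F') : F' = F := by
  by_contra hne
  exact hvG (mem_inter.mp (hG F' hF' hne (mem_inter.mpr ⟨hvF, hvF'⟩))).2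

/-- A leaf of a simplicial complex with more than one facet has a free vertex. -/
theorem leaf_has_free_vertex (Δ : Finset (Finset α))
    (hmax : FacetAntichain Δ) (hcard : 1 < Δ.card)
    (F : Finset α) (hF : IsLeaf Δ F) :
    ∃ v ∈ F, ∀ G ∈ Δ, v ∈ G → G = F := by
  obtain ⟨G, hGΔ, hGF, hG⟩ := hF.exists_witness_of_one_lt_card hcard
  obtain ⟨v, hvF, hvG⟩ : ∃ v ∈ F, v ∉ G :=
    not_subset.mp fun hFG => hGF (hmax F hF.1 G hGΔ hFG).symm
  exact ⟨v, hvF, fun _ hF' hvF' => eq_of_mem_of_not_mem_witness hG hvF hvG hF' hvF'⟩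
end

section
/- Every tree with at least two facets has at least two distinct leaves. -/
/-! Remove a leaf `F` of a forest, with joint `G`. The remaining facets still form a forest, and
any leaf `H ≠ G` of it is a leaf of the whole complex: its new intersection `H ∩ F` lies in
`F ∩ G`, hence in `H ∩ G`, which the joint of `H` already absorbs. Induction on the number of
facets then yields two distinct leaves, the second one coming from the smaller forest. -/

open Finset

variable {α : Type*} [DecidableEq α]

theorem IsForest.subset {Δ Γ : Finset (Finset α)} (hΔ : IsForest Δ) (hΓ : Γ ⊆ Δ) :
    IsForest Γ :=
  fun Γ' hΓ' => hΔ Γ' (hΓ'.trans hΓ)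

theorem isLeaf_pair {F G : Finset α} (hFG : F ≠ G) : IsLeaf {F, G} F := by
  refine ⟨mem_insert_self F {G}, Or.inr ⟨G, by simp, hFG.symm, fun F' hF' hF'F => ?_⟩⟩
  obtain rfl : F' = G := by simpa [hF'F] using hF'
  exact subset_rfl

theorem isLeaf_of_isLeaf_erase {Δ : Finset (Finset α)} {F G H : Finset α} (hG : G ∈ Δ)
    (hGF : G ≠ F) (hFG : ∀ F' ∈ Δ, F' ≠ F → F ∩ F' ⊆ F ∩ G)
    (hH : IsLeaf (Δ.erase F) H) (hHG : H ≠ G) : IsLeaf Δ H := by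
  obtain ⟨hHmem, hsingle | ⟨W, hW, hWH, hHW⟩⟩ := hH
  · have : G ∈ ({H} : Finset (Finset α)) := hsingle ▸ mem_erase.mpr ⟨hGF, hG⟩
    exact absurd (mem_singleton.mp this).symm hHG
  refine ⟨mem_of_mem_erase hHmem, Or.inr ⟨W, mem_of_mem_erase hW, hWH, fun F' hF' hF'H => ?_⟩⟩
  obtain rfl | hF'F := eq_or_ne F' F
  · intro x hx
    have hxG : x ∈ F' ∩ G :=
      hFG H (mem_of_mem_erase hHmem) (ne_of_mem_erase hHmem) (by rwa [inter_comm])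
    exact hHW G (mem_erase.mpr ⟨hGF, hG⟩) hHG.symm
      (mem_inter.mpr ⟨(mem_inter.mp hx).1, (mem_inter.mp hxG).2⟩)
  · exact hHW F' (mem_erase.mpr ⟨hF'F, hF'⟩) hF'H

theorem IsForest.exists_two_leaves {Δ : Finset (Finset α)} (hΔ : IsForest Δ) (hcard : 2 ≤ #Δ) :
    ∃ F G : Finset α, F ≠ G ∧ IsLeaf Δ F ∧ IsLeaf Δ G := by
  induction Δ using Finset.strongInduction with
  | _ Δ ih =>
  obtain ⟨F, hFleaf⟩ := hΔ Δ subset_rfl (card_pos.mp (by omega))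
  obtain ⟨hF, hsingle | ⟨G, hG, hGF, hFG⟩⟩ := id hFleaf
  · simp [hsingle] at hcard
  have hGerase : G ∈ Δ.erase F := mem_erase.mpr ⟨hGF, hG⟩
  by_cases hpair : #(Δ.erase F) = 1
  · have hrest : Δ.erase F = {G} := eq_singleton_iff_unique_mem.mpr
      ⟨hGerase, fun H hH => card_le_one.mp hpair.le H hH G hGerase⟩
    have hΔpair : Δ = {F, G} := by rw [← insert_erase hF, hrest]
    subst hΔpair
    exact ⟨F, G, hGF.symm, isLeaf_pair hGF.symm, pair_comm G F ▸ isLeaf_pair hGF⟩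
  have hcard' : 2 ≤ #(Δ.erase F) := by
    have := card_pos.mpr ⟨G, hGerase⟩
    omega
  obtain ⟨H₁, H₂, hH₁₂, hH₁, hH₂⟩ :=
    ih _ (erase_ssubset hF) (hΔ.subset (erase_subset F Δ)) hcard'
  obtain ⟨H, hHG, hH⟩ : ∃ H, H ≠ G ∧ IsLeaf (Δ.erase F) H := by
    by_cases h : H₁ = G
    · exact ⟨H₂, fun h₂ => hH₁₂ (h.trans h₂.symm), hH₂⟩
    · exact ⟨H₁, h, hH₁⟩
  exact ⟨F, H, (ne_of_mem_erase hH.1).symm, hFleaf,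
    isLeaf_of_isLeaf_erase hG hGF hFG hH hHG⟩

/-- Every tree with at least two facets has at least two distinct leaves. -/
theorem tree_two_leaves (Δ : Finset (Finset α))
    (htree : IsTree Δ) (hcard : 2 ≤ Δ.card) :
    ∃ F G : Finset α, F ≠ G ∧ IsLeaf Δ F ∧ IsLeaf Δ G :=
  htree.2.exists_two_leaves hcard
end

section
/- Localization of a forest is a forest: if Δ is a forest on vertex set V and W ⊆ V, then the simplicial complex whose facets are the maximal elements of {F ∩ W : F facet of Δ, F ∩ W ≠ ∅} is a forest. -/
open Finset

variable {α : Type*} [DecidableEq α]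

/-- The localization of `Δ` at a vertex set `W`: the inclusion-maximal sets
among the nonempty intersections `F ∩ W` over facets `F` of `Δ`. -/
def localize (Δ : Finset (Finset α)) (W : Finset α) : Finset (Finset α) :=
  let S := (Δ.image (· ∩ W)).filter fun F => F.Nonempty
  S.filter fun F => ∀ G ∈ S, F ⊆ G → F = G

/-!
A subcollection of `{F ∩ W : F ∈ Δ}` lifts injectively to a subcollection of `Δ`, and
intersecting with `W` sends a leaf `F` of the lift, with joint `G`, to the leaf `F ∩ W` with
joint `G ∩ W` (injectivity keeps `G ∩ W ≠ F ∩ W`). The localization is a subcollection of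
`{F ∩ W : F ∈ Δ}`.
-/

theorem Finset.exists_subset_injOn_image_eq {β γ : Type*} [DecidableEq γ] {f : β → γ}
    {s : Finset β} {t : Finset γ} (h : t ⊆ s.image f) :
    ∃ u ⊆ s, Set.InjOn f u ∧ u.image f = t := by
  obtain ⟨u, hus, hbij⟩ := Set.exists_subset_bijOn (↑s ∩ f ⁻¹' ↑t) f
  have hfin : u.Finite := s.finite_toSet.subset (hus.trans Set.inter_subset_left)
  refine ⟨hfin.toFinset, ?_, by simpa using hbij.injOn, ?_⟩
  · exact fun x hx => (hus (hfin.mem_toFinset.mp hx)).1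
  · rw [← coe_inj, coe_image, hfin.coe_toFinset, hbij.image_eq, Set.image_inter_preimage,
      Set.inter_eq_right]
    exact_mod_cast h

theorem IsLeaf.image_inter {Δ : Finset (Finset α)} {F : Finset α} (hF : IsLeaf Δ F)
    (W : Finset α) (hinj : Set.InjOn (· ∩ W) Δ) :
    IsLeaf (Δ.image (· ∩ W)) (F ∩ W) := by
  obtain ⟨hFΔ, hsingle | ⟨G, hGΔ, hGF, hjoint⟩⟩ := hF
  · exact ⟨mem_image_of_mem _ hFΔ, .inl (by simp [hsingle])⟩
  refine ⟨mem_image_of_mem _ hFΔ, .inr ⟨G ∩ W, mem_image_of_mem _ hGΔ,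
    fun h => hGF (hinj hGΔ hFΔ h), ?_⟩⟩
  simp only [mem_image, ne_eq, forall_exists_index, and_imp, forall_apply_eq_imp_iff₂]
  intro F' hF'Δ hF'F
  rw [← inter_inter_distrib_right, ← inter_inter_distrib_right]
  exact inter_subset_inter_right (hjoint F' hF'Δ (ne_of_apply_ne (· ∩ W) hF'F))

theorem IsForest.image_inter {Δ : Finset (Finset α)} (hΔ : IsForest Δ) (W : Finset α) :
    IsForest (Δ.image (· ∩ W)) := by
  intro Γ hΓ hne
  obtain ⟨Δ₀, hΔ₀, hinj, rfl⟩ := exists_subset_injOn_image_eq hΓ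
  obtain ⟨F, hF⟩ := hΔ Δ₀ hΔ₀ (image_nonempty.mp hne)
  exact ⟨F ∩ W, hF.image_inter W hinj⟩

theorem localize_subset_image_inter (Δ : Finset (Finset α)) (W : Finset α) :
    localize Δ W ⊆ Δ.image (· ∩ W) :=
  (filter_subset _ _).trans (filter_subset _ _)

/-- Localization of a forest is a forest. -/
theorem localization_of_forest_is_forest (Δ : Finset (Finset α))
    (hforest : IsForest Δ) (W : Finset α) :
    IsForest (localize Δ W) :=
  (hforest.image_inter W).subset (localize_subset_image_inter Δ W)
end

section
/- If F is a leaf of a simplicial complex Δ with joint G, then removing G does not change the vertex covering number: α(Δ \ {G}) = α(Δ). -/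
/-! A cover of `Δ.erase G` that misses `G` can trade its vertex `x` in the leaf `F` for a vertex
`y ∈ F ∩ G`: a facet other than `F` and `G` that contained `x` would meet `F` in `x`, hence contain
`x ∈ F ∩ G`, which the cover misses. So covers of `Δ.erase G` yield covers of `Δ` that are no
larger, and the reverse direction is restriction. -/

open Finset

variable {α : Type*} [DecidableEq α]

theorem IsVertexCover.anti {Γ Δ : Finset (Finset α)} {A : Finset α} (hΓΔ : Γ ⊆ Δ)
    (hA : IsVertexCover Δ A) : IsVertexCover Γ A :=
  fun F hF => hA F (hΓΔ hF)

theorem IsVertexCover.of_erase {Δ : Finset (Finset α)} {G B : Finset α}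
    (hB : IsVertexCover (Δ.erase G) B) (hBG : (B ∩ G).Nonempty) : IsVertexCover Δ B := by
  intro F' hF'
  by_cases hF'G : F' = G
  · exact hF'G ▸ hBG
  · exact hB F' (mem_erase.2 ⟨hF'G, hF'⟩)

theorem isVertexCover_insert_erase {Δ : Finset (Finset α)} {G F B : Finset α} {x y : α}
    (hsub : ∀ F' ∈ Δ, F' ≠ F → F ∩ F' ⊆ F ∩ G) (hB : IsVertexCover (Δ.erase G) B)
    (hBG : ¬(B ∩ G).Nonempty) (hxB : x ∈ B) (hxF : x ∈ F) (hyF : y ∈ F) (hyG : y ∈ G) :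
    IsVertexCover Δ (insert y (B.erase x)) := by
  intro F' hF'
  by_cases hF'G : F' = G
  · exact ⟨y, mem_inter.2 ⟨mem_insert_self _ _, hF'G ▸ hyG⟩⟩
  by_cases hF'F : F' = F
  · exact ⟨y, mem_inter.2 ⟨mem_insert_self _ _, hF'F ▸ hyF⟩⟩
  obtain ⟨z, hz⟩ := hB F' (mem_erase.2 ⟨hF'G, hF'⟩)
  obtain ⟨hzB, hzF'⟩ := mem_inter.1 hz
  have hzx : z ≠ x := by
    rintro rfl
    have hzG : z ∈ G := (mem_inter.1 (hsub F' hF' hF'F (mem_inter.2 ⟨hxF, hzF'⟩))).2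
    exact hBG ⟨z, mem_inter.2 ⟨hzB, hzG⟩⟩
  exact ⟨z, mem_inter.2 ⟨mem_insert_of_mem (mem_erase.2 ⟨hzx, hzB⟩), hzF'⟩⟩

theorem IsJoint.exists_isVertexCover_card_le {Δ : Finset (Finset α)} {G F B : Finset α}
    (hjoint : IsJoint Δ G F) (hB : IsVertexCover (Δ.erase G) B) :
    ∃ A, IsVertexCover Δ A ∧ A.card ≤ B.card := by
  by_cases hBG : (B ∩ G).Nonempty
  · exact ⟨B, hB.of_erase hBG, le_rfl⟩
  obtain ⟨hF, -, hGF, hsub, y, hy⟩ := hjoint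
  obtain ⟨x, hx⟩ := hB F (mem_erase.2 ⟨hGF.symm, hF⟩)
  obtain ⟨hxB, hxF⟩ := mem_inter.1 hx
  obtain ⟨hyF, hyG⟩ := mem_inter.1 hy
  refine ⟨_, isVertexCover_insert_erase hsub hB hBG hxB hxF hyF hyG, ?_⟩
  calc (insert y (B.erase x)).card ≤ (B.erase x).card + 1 := card_insert_le _ _
    _ = B.card := card_erase_add_one hxB

theorem coverNum_le_card {Δ : Finset (Finset α)} {A : Finset α} (hA : IsVertexCover Δ A) :
    coverNum Δ ≤ A.card :=
  Nat.sInf_le (s := {n | ∃ A, IsVertexCover Δ A ∧ A.card = n}) ⟨A, hA, rfl⟩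

theorem exists_isVertexCover_card_eq_coverNum {Δ : Finset (Finset α)}
    (h : ∃ A, IsVertexCover Δ A) : ∃ A, IsVertexCover Δ A ∧ A.card = coverNum Δ := by
  obtain ⟨A, hA⟩ := h
  exact Nat.sInf_mem (s := {n | ∃ A, IsVertexCover Δ A ∧ A.card = n}) ⟨_, A, hA, rfl⟩

theorem coverNum_eq_zero_of_forall_not_isVertexCover {Δ : Finset (Finset α)}
    (h : ∀ A, ¬IsVertexCover Δ A) : coverNum Δ = 0 := by
  refine Nat.sInf_eq_zero.2 (Or.inr (Set.eq_empty_of_forall_notMem ?_))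
  rintro _ ⟨A, hA, -⟩
  exact h A hA

theorem coverNum_eq_of_subset {Γ Δ : Finset (Finset α)} (hΓΔ : Γ ⊆ Δ)
    (h : ∀ B, IsVertexCover Γ B → ∃ A, IsVertexCover Δ A ∧ A.card ≤ B.card) :
    coverNum Γ = coverNum Δ := by
  by_cases hΓ : ∃ B, IsVertexCover Γ B
  · obtain ⟨B, hB, hBcard⟩ := exists_isVertexCover_card_eq_coverNum hΓ
    obtain ⟨A, hA, hAB⟩ := h B hB
    obtain ⟨A', hA', hA'card⟩ := exists_isVertexCover_card_eq_coverNum ⟨A, hA⟩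
    apply le_antisymm
    · exact hA'card ▸ coverNum_le_card (hA'.anti hΓΔ)
    · exact hBcard ▸ (coverNum_le_card hA).trans hAB
  · push Not at hΓ
    rw [coverNum_eq_zero_of_forall_not_isVertexCover hΓ,
      coverNum_eq_zero_of_forall_not_isVertexCover fun A hA => hΓ A (hA.anti hΓΔ)]

theorem coverNum_erase_joint_general (Δ : Finset (Finset α))
    (F G : Finset α) (hjoint : IsJoint Δ G F) :
    coverNum (Δ.erase G) = coverNum Δ :=
  coverNum_eq_of_subset (erase_subset G Δ) fun _ hB => hjoint.exists_isVertexCover_card_le hB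

/-- Removing a joint of a leaf does not change the vertex covering number. -/
theorem coverNum_erase_joint (Δ : Finset (Finset α))
    (hmax : FacetAntichain Δ) (hne : ∀ F ∈ Δ, F.Nonempty)
    (F G : Finset α) (hleaf : IsLeaf Δ F) (hjoint : IsJoint Δ G F) :
    coverNum (Δ.erase G) = coverNum Δ :=
  coverNum_erase_joint_general Δ F G hjoint
end

section
/- Every maximal independent set of facets of cardinality α(Δ) in an unmixed tree Δ contains all leaves of Δ; in particular, the leaves of an unmixed tree are pairwise disjoint. -/
open Finset

variable {α : Type*} [DecidableEq α]

section LeafAux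

variable {Δ Γ : Finset (Finset α)}

lemma forest_subset (h : IsForest Δ) (hsub : Γ ⊆ Δ) : IsForest Γ :=
  fun Γ' hΓ' hne => h Γ' (hΓ'.trans hsub) hne

lemma get_leaf (hfor : IsForest Δ) (hsub : Γ ⊆ Δ) {X Y : Finset α}
    (hX : X ∈ Γ) (hY : Y ∈ Γ) (hXY : X ≠ Y) :
    ∃ L ∈ Γ, ∃ Q ∈ Γ, Q ≠ L ∧ ∀ F' ∈ Γ, F' ≠ L → L ∩ F' ⊆ L ∩ Q := by
  obtain ⟨L, hL, hc⟩ := hfor Γ hsub ⟨X, hX⟩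
  rcases hc with hsing | ⟨Q, hQ, hQL, hdom⟩
  · exfalso
    rw [hsing] at hX hY
    exact hXY ((Finset.mem_singleton.mp hX).trans (Finset.mem_singleton.mp hY).symm)
  · exact ⟨L, hL, Q, hQ, hQL, hdom⟩

/-- union of all facets covers everything -/
lemma cover_sup (hne : ∀ F ∈ Δ, F.Nonempty) : IsVertexCover Δ (Δ.sup id) := by
  intro F hF
  obtain ⟨x, hx⟩ := hne F hF
  exact ⟨x, Finset.mem_inter.mpr ⟨Finset.mem_sup.mpr ⟨F, hF, hx⟩, hx⟩⟩

lemma coverNum_le {A : Finset α} (h : IsVertexCover Δ A) : coverNum Δ ≤ A.card :=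
  Nat.sInf_le ⟨A, h, rfl⟩

lemma exists_min_cover (hne : ∀ F ∈ Δ, F.Nonempty) :
    ∃ A : Finset α, IsVertexCover Δ A ∧ A.card = coverNum Δ := by
  have hne' : {n | ∃ A : Finset α, IsVertexCover Δ A ∧ A.card = n}.Nonempty :=
    ⟨(Δ.sup id).card, Δ.sup id, cover_sup hne, rfl⟩
  obtain ⟨A, hA, hcard⟩ := Nat.sInf_mem hne'
  exact ⟨A, hA, hcard⟩

/-- a cover of minimum cardinality is a minimal cover -/
lemma exists_min_cover' (hne : ∀ F ∈ Δ, F.Nonempty) :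
    ∃ A : Finset α, IsMinimalVertexCover Δ A ∧ A.card = coverNum Δ := by
  obtain ⟨A, hA, hcard⟩ := exists_min_cover hne
  refine ⟨A, ⟨hA, ?_⟩, hcard⟩
  intro B hBA hB
  exact Finset.eq_of_subset_of_card_le hBA (by
    calc A.card = coverNum Δ := hcard
    _ ≤ B.card := coverNum_le hB)

lemma unmixed_minimal_card (hunmix : Unmixed Δ) (hne : ∀ F ∈ Δ, F.Nonempty)
    {B : Finset α} (hB : IsMinimalVertexCover Δ B) : B.card = coverNum Δ := by
  obtain ⟨A, hA, hcard⟩ := exists_min_cover' hne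
  rw [← hcard]
  exact hunmix B A hB hA

/-- every cover contains a minimal cover -/
lemma exists_minimal_subcover {C : Finset α} (hC : IsVertexCover Δ C) :
    ∃ B ⊆ C, IsMinimalVertexCover Δ B := by
  classical
  have hne : (C.powerset.filter (fun B => IsVertexCover Δ B)).Nonempty :=
    ⟨C, Finset.mem_filter.mpr ⟨Finset.mem_powerset.mpr (Finset.Subset.refl C), hC⟩⟩
  obtain ⟨B, hBmem, hBmin⟩ :=
    Finset.exists_min_image (C.powerset.filter (fun B => IsVertexCover Δ B)) Finset.card hne
  rw [Finset.mem_filter, Finset.mem_powerset] at hBmem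
  refine ⟨B, hBmem.1, hBmem.2, ?_⟩
  intro B' hB'B hB'
  refine Finset.eq_of_subset_of_card_le hB'B ?_
  exact hBmin B' (Finset.mem_filter.mpr ⟨Finset.mem_powerset.mpr (hB'B.trans hBmem.1), hB'⟩)

/-- counting: a set meeting each member of a pairwise-disjoint family is large -/
lemma card_le_of_meets (S : Finset (Finset α)) (A : Finset α)
    (hdisj : ∀ F ∈ S, ∀ G ∈ S, F ≠ G → F ∩ G = ∅)
    (hmeet : ∀ F ∈ S, (A ∩ F).Nonempty) : S.card ≤ A.card := by
  classical
  induction S using Finset.induction_on generalizing A with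
  | empty => simp
  | @insert a s ha ih =>
    obtain ⟨x, hx⟩ := hmeet a (Finset.mem_insert_self a s)
    rw [Finset.mem_inter] at hx
    have hstep : s.card ≤ (A.erase x).card := by
      refine ih (A.erase x) (fun F hF G hG hFG => hdisj F (Finset.mem_insert_of_mem hF)
        G (Finset.mem_insert_of_mem hG) hFG) ?_
      intro F hF
      obtain ⟨y, hy⟩ := hmeet F (Finset.mem_insert_of_mem hF)
      rw [Finset.mem_inter] at hy
      have hyx : y ≠ x := by
        intro h
        have : x ∈ a ∩ F := Finset.mem_inter.mpr ⟨hx.2, h ▸ hy.2⟩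
        have hd := hdisj a (Finset.mem_insert_self a s) F (Finset.mem_insert_of_mem hF)
          (by rintro rfl; exact ha hF)
        rw [hd] at this
        exact absurd this (Finset.notMem_empty x)
      exact ⟨y, Finset.mem_inter.mpr ⟨Finset.mem_erase.mpr ⟨hyx, hy.1⟩, hy.2⟩⟩
    have hcard : (A.erase x).card + 1 = A.card := by
      rw [Finset.card_erase_of_mem hx.1]
      exact Nat.succ_pred_eq_of_pos (Finset.card_pos.mpr ⟨x, hx.1⟩)
    rw [Finset.card_insert_of_notMem ha]
    omega

end LeafAux
section LeafCore

variable {Δ : Finset (Finset α)}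

/-- Core of part 1: any independent set of facets of cardinality α(Δ) in an
unmixed antichain complex contains every leaf. -/
lemma leaf_mem_of_indep (hmax : FacetAntichain Δ) (hne : ∀ F ∈ Δ, F.Nonempty)
    (hunmix : Unmixed Δ) {S : Finset (Finset α)} (hSind : IndependentFacets Δ S)
    (hScard : S.card = coverNum Δ) {F : Finset α} (hF : IsLeaf Δ F) : F ∈ S := by
  classical
  obtain ⟨hFΔ, hcase⟩ := hF
  by_contra hFS
  rcases hcase with hsing | ⟨G, hGΔ, hGF, hdom⟩
  · -- Δ = {F} : then coverNum Δ = 1 and S = {F}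
    obtain ⟨y, hy⟩ := hne F hFΔ
    have hcov : IsVertexCover Δ {y} := by
      intro H hH
      rw [hsing, Finset.mem_singleton] at hH
      subst hH
      exact ⟨y, Finset.mem_inter.mpr ⟨Finset.mem_singleton_self y, hy⟩⟩
    have h1 : coverNum Δ ≤ 1 := by
      have := coverNum_le hcov
      simpa using this
    have h0 : coverNum Δ ≠ 0 := by
      intro h
      obtain ⟨A, hA, hAcard⟩ := exists_min_cover hne
      rw [h, Finset.card_eq_zero] at hAcard
      obtain ⟨z, hz⟩ := hA F hFΔ
      rw [hAcard] at hz
      simp at hz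
    have hS1 : S.card = 1 := by omega
    have hSsub : S ⊆ {F} := by rw [← hsing]; exact hSind.1
    have : S = {F} := Finset.eq_of_subset_of_card_le hSsub (by simp [hS1])
    exact hFS (this ▸ Finset.mem_singleton_self F)
  · -- main case: joint G exists
    have hvex : (F \ G).Nonempty := by
      rw [Finset.sdiff_nonempty]
      intro hsub
      exact hGF (hmax F hFΔ G hGΔ hsub).symm
    obtain ⟨v, hv⟩ := hvex
    rw [Finset.mem_sdiff] at hv
    -- the cover C
    set C : Finset α := insert v ((Δ.sup id) \ F) with hC
    have hCcov : IsVertexCover Δ C := by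
      intro H hH
      by_cases hHF : H = F
      · subst hHF
        exact ⟨v, Finset.mem_inter.mpr ⟨Finset.mem_insert_self _ _, hv.1⟩⟩
      · have : ¬ H ⊆ F := fun hsub => hHF (hmax H hH F hFΔ hsub)
        rw [← Finset.sdiff_nonempty] at this
        obtain ⟨y, hy⟩ := this
        rw [Finset.mem_sdiff] at hy
        refine ⟨y, Finset.mem_inter.mpr ⟨Finset.mem_insert_of_mem ?_, hy.1⟩⟩
        exact Finset.mem_sdiff.mpr ⟨Finset.mem_sup.mpr ⟨H, hH, hy.1⟩, hy.2⟩
    obtain ⟨B, hBC, hBmin⟩ := exists_minimal_subcover hCcov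
    have hBcard : B.card = coverNum Δ := unmixed_minimal_card hunmix hne hBmin
    have hvB : v ∈ B := by
      obtain ⟨z, hz⟩ := hBmin.1 F hFΔ
      rw [Finset.mem_inter] at hz
      have : z ∈ C := hBC hz.1
      rw [hC, Finset.mem_insert] at this
      rcases this with rfl | hzz
      · exact hz.1
      · rw [Finset.mem_sdiff] at hzz
        exact absurd hz.2 hzz.2
    -- counting contradiction
    have hcount : S.card ≤ (B.erase v).card := by
      refine card_le_of_meets S (B.erase v) hSind.2 ?_
      intro H hHS
      obtain ⟨b, hb⟩ := hBmin.1 H (hSind.1 hHS)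
      rw [Finset.mem_inter] at hb
      have hbv : b ≠ v := by
        rintro rfl
        have hHF : H ≠ F := fun h => hFS (h ▸ hHS)
        have : b ∈ F ∩ H := Finset.mem_inter.mpr ⟨hv.1, hb.2⟩
        have := hdom H (hSind.1 hHS) hHF this
        rw [Finset.mem_inter] at this
        exact hv.2 this.2
      exact ⟨b, Finset.mem_inter.mpr ⟨Finset.mem_erase.mpr ⟨hbv, hb.1⟩, hb.2⟩⟩
    rw [Finset.card_erase_of_mem hvB] at hcount
    have hpos : 0 < B.card := Finset.card_pos.mpr ⟨v, hvB⟩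
    omega

end LeafCore
section GraphAux

variable {Δ Γ Γ' : Finset (Finset α)}

/-- one adjacency step inside a subfamily -/
def FStep (Γ : Finset (Finset α)) (U V : Finset α) : Prop :=
  U ≠ V ∧ U ∈ Γ ∧ V ∈ Γ ∧ (U ∩ V).Nonempty

/-- connectivity inside a subfamily -/
def FReach (Γ : Finset (Finset α)) : Finset α → Finset α → Prop :=
  Relation.ReflTransGen (FStep Γ)

lemma fstep_symm : Symmetric (FStep Γ) := by
  rintro U V ⟨h1, h2, h3, h4⟩
  exact ⟨h1.symm, h3, h2, by rwa [Finset.inter_comm]⟩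

lemma freach_symm {U V : Finset α} (h : FReach Γ U V) : FReach Γ V U :=
  by haveI : Std.Symm (FStep Γ) := ⟨fun a b hab => fstep_symm hab⟩; exact Std.Symm.symm (r := Relation.ReflTransGen (FStep Γ)) _ _ h

lemma freach_mono (hsub : Γ ⊆ Γ') {U V : Finset α} (h : FReach Γ U V) :
    FReach Γ' U V :=
  Relation.ReflTransGen.mono (r := FStep Γ) (p := FStep Γ')
    (fun a b (hab : FStep Γ a b) => (⟨hab.1, hsub hab.2.1, hsub hab.2.2.1, hab.2.2.2⟩ : FStep Γ' a b)) U V h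

lemma freach_trans {U V W : Finset α} (h : FReach Γ U V) (h' : FReach Γ V W) :
    FReach Γ U W := Relation.ReflTransGen.trans h h'

/-- crossing lemma -/
lemma freach_cross {P : Finset α → Prop} {U V : Finset α} (h : FReach Γ U V)
    (hU : P U) (hV : ¬ P V) : ∃ X Y, FStep Γ X Y ∧ P X ∧ ¬ P Y := by
  classical
  induction h with
  | refl => exact absurd hU hV
  | @tail b c hab hbc ih =>
    by_cases hPb : P b
    · exact ⟨b, c, hbc, hPb, hV⟩
    · exact ih hPb

/-- mapping a chain through a vertex-substitution -/
lemma freach_map {β : Type*} {r r' : β → β → Prop} (σ : β → β)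
    (h : ∀ x y, r x y → Relation.ReflTransGen r' (σ x) (σ y)) {a b : β}
    (hab : Relation.ReflTransGen r a b) :
    Relation.ReflTransGen r' (σ a) (σ b) := by
  induction hab with
  | refl => exact Relation.ReflTransGen.refl
  | @tail x y hax hxy ih => exact ih.trans (h x y hxy)

lemma freach_in_pair {A B X : Finset α} (hAB : A ∩ B = ∅)
    (h : FReach {A, B} A X) : X = A := by
  induction h with
  | refl => rfl
  | @tail y x hay hyx ih =>
    subst ih
    obtain ⟨hne, _, hx, hint⟩ := hyx
    rw [Finset.mem_insert, Finset.mem_singleton] at hx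
    rcases hx with rfl | rfl
    · exact absurd rfl hne
    · rw [hAB] at hint
      exact absurd hint (by simp)

end GraphAux
section TripleHelly

variable {Δ : Finset (Finset α)}

/-- The triple lemma: in a forest, two intersecting facets that both meet a
third facet `F` meet inside `F`. -/
lemma triple_lemma (hfor : IsForest Δ) {F A B : Finset α}
    (hFΔ : F ∈ Δ) (hAΔ : A ∈ Δ) (hBΔ : B ∈ Δ)
    (hFA : F ≠ A) (hFB : F ≠ B) (hAB : A ≠ B)
    (h1 : (F ∩ A).Nonempty) (h2 : (F ∩ B).Nonempty) (h3 : (A ∩ B).Nonempty) :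
    (F ∩ A ∩ B).Nonempty := by
  classical
  set Γ : Finset (Finset α) := {F, A, B} with hΓ
  have hsub : Γ ⊆ Δ := by
    intro X hX
    rw [hΓ] at hX
    simp only [Finset.mem_insert, Finset.mem_singleton] at hX
    rcases hX with rfl | rfl | rfl <;> assumption
  have hFΓ : F ∈ Γ := by simp [hΓ]
  have hAΓ : A ∈ Γ := by simp [hΓ]
  have hBΓ : B ∈ Γ := by simp [hΓ]
  obtain ⟨L, hL, Q, hQ, hQL, hdom⟩ := get_leaf hfor hsub hFΓ hAΓ hFA
  rw [hΓ] at hL hQ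
  simp only [Finset.mem_insert, Finset.mem_singleton] at hL hQ
  -- helper to finish in each case
  rcases hL with rfl | rfl | rfl
  · -- L = F
    rcases hQ with rfl | rfl | rfl
    · exact absurd rfl hQL
    · -- Q = A : F ∩ B ⊆ F ∩ A
      obtain ⟨z, hz⟩ := h2
      have hz' := hdom B hBΓ (Ne.symm hFB) hz
      rw [Finset.mem_inter] at hz hz'
      exact ⟨z, by rw [Finset.mem_inter, Finset.mem_inter]; exact ⟨⟨hz.1, hz'.2⟩, hz.2⟩⟩
    · -- Q = B : F ∩ A ⊆ F ∩ B
      obtain ⟨z, hz⟩ := h1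
      have hz' := hdom A hAΓ (Ne.symm hFA) hz
      rw [Finset.mem_inter] at hz hz'
      exact ⟨z, by rw [Finset.mem_inter, Finset.mem_inter]; exact ⟨⟨hz.1, hz.2⟩, hz'.2⟩⟩
  · -- L = A
    rcases hQ with rfl | rfl | rfl
    · -- Q = F : A ∩ B ⊆ A ∩ F
      obtain ⟨z, hz⟩ := h3
      have hz' := hdom B hBΓ (Ne.symm hAB) hz
      rw [Finset.mem_inter] at hz hz'
      exact ⟨z, by rw [Finset.mem_inter, Finset.mem_inter]; exact ⟨⟨hz'.2, hz.1⟩, hz.2⟩⟩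
    · exact absurd rfl hQL
    · -- Q = B : A ∩ F ⊆ A ∩ B
      obtain ⟨z, hz⟩ := h1
      rw [Finset.mem_inter] at hz
      have hz' := hdom F hFΓ hFA (Finset.mem_inter.mpr ⟨hz.2, hz.1⟩)
      rw [Finset.mem_inter] at hz'
      exact ⟨z, by rw [Finset.mem_inter, Finset.mem_inter]; exact ⟨⟨hz.1, hz.2⟩, hz'.2⟩⟩
  · -- L = B
    rcases hQ with rfl | rfl | rfl
    · -- Q = F : B ∩ A ⊆ B ∩ F
      obtain ⟨z, hz⟩ := h3
      rw [Finset.mem_inter] at hz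
      have hz' := hdom A hAΓ hAB (Finset.mem_inter.mpr ⟨hz.2, hz.1⟩)
      rw [Finset.mem_inter] at hz'
      exact ⟨z, by rw [Finset.mem_inter, Finset.mem_inter]; exact ⟨⟨hz'.2, hz.1⟩, hz.2⟩⟩
    · -- Q = A : B ∩ F ⊆ B ∩ A
      obtain ⟨z, hz⟩ := h2
      rw [Finset.mem_inter] at hz
      have hz' := hdom F hFΓ hFB (Finset.mem_inter.mpr ⟨hz.2, hz.1⟩)
      rw [Finset.mem_inter] at hz'
      exact ⟨z, by rw [Finset.mem_inter, Finset.mem_inter]; exact ⟨⟨hz.1, hz'.2⟩, hz.2⟩⟩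
    · exact absurd rfl hQL

/-- Helly-type property of forests. -/
lemma helly (hfor : IsForest Δ) (hne : ∀ F ∈ Δ, F.Nonempty) :
    ∀ (n : ℕ) (S : Finset (Finset α)) (P : Finset α), S.card ≤ n → S ⊆ Δ →
    P ∈ Δ → P ∉ S → (∀ H ∈ S, (P ∩ H).Nonempty) →
    (∀ H ∈ S, ∀ H' ∈ S, H ≠ H' → (P ∩ H ∩ H').Nonempty) →
    ∃ x, x ∈ P ∧ ∀ H ∈ S, x ∈ H := by
  classical
  intro n
  induction n with
  | zero =>
    intro S P hcard hsub hP hPS htr hpw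
    rw [Nat.le_zero, Finset.card_eq_zero] at hcard
    subst hcard
    obtain ⟨x, hx⟩ := hne P hP
    exact ⟨x, hx, by simp⟩
  | succ n ih =>
    intro S P hcard hsub hP hPS htr hpw
    by_cases hsmall : S.card ≤ n
    · exact ih S P hsmall hsub hP hPS htr hpw
    have hcard' : S.card = n + 1 := by omega
    -- small base cases
    match n, ih, hcard' with
    | 0, ih, hcard' =>
      obtain ⟨H, rfl⟩ := Finset.card_eq_one.mp hcard'
      obtain ⟨x, hx⟩ := htr H (Finset.mem_singleton_self H)
      rw [Finset.mem_inter] at hx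
      exact ⟨x, hx.1, by simpa using hx.2⟩
    | 1, ih, hcard' =>
      obtain ⟨a, b, hab, rfl⟩ := Finset.card_eq_two.mp hcard'
      obtain ⟨x, hx⟩ := hpw a (by simp) b (by simp) hab
      rw [Finset.mem_inter, Finset.mem_inter] at hx
      refine ⟨x, hx.1.1, ?_⟩
      intro H hH
      rw [Finset.mem_insert, Finset.mem_singleton] at hH
      rcases hH with rfl | rfl
      · exact hx.1.2
      · exact hx.2
    | (m + 2), ih, hcard' =>
      -- main inductive case: S.card = m + 3 ≥ 3
      set Γ : Finset (Finset α) := insert P S with hΓ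
      have hΓsub : Γ ⊆ Δ := by
        intro X hX
        rw [hΓ, Finset.mem_insert] at hX
        rcases hX with rfl | hX
        · exact hP
        · exact hsub hX
      have hSne : S.Nonempty := Finset.card_pos.mp (by omega)
      obtain ⟨H₁, hH₁⟩ := hSne
      have hH₁P : H₁ ≠ P := fun h => hPS (h ▸ hH₁)
      obtain ⟨LL, hLΓ, QQ, hQΓ, hQL, hdom⟩ := get_leaf hfor hΓsub
        (Finset.mem_insert_of_mem hH₁ : H₁ ∈ Γ) (Finset.mem_insert_self P S) hH₁P
      rw [hΓ, Finset.mem_insert] at hLΓ hQΓ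
      rcases hLΓ with rfl | hLS
      · -- LL = P, QQ ∈ S
        rcases hQΓ with rfl | hQS
        · exact absurd rfl hQL
        · -- recurse on S.erase QQ
          have hrec := ih (S.erase QQ) LL (by rw [Finset.card_erase_of_mem hQS]; omega)
            ((Finset.erase_subset QQ S).trans hsub) hP
            (fun h => hPS (Finset.mem_of_mem_erase h))
            (fun H hH => htr H (Finset.mem_of_mem_erase hH))
            (fun H hH H' hH' hne' => hpw H (Finset.mem_of_mem_erase hH)
              H' (Finset.mem_of_mem_erase hH') hne')
          obtain ⟨x, hxP, hxall⟩ := hrec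
          refine ⟨x, hxP, ?_⟩
          intro H hH
          by_cases hHQ : H = QQ
          · rw [hHQ]
            -- x ∈ LL ∩ H₀ ⊆ LL ∩ QQ for some H₀ ∈ S.erase QQ
            have : (S.erase QQ).Nonempty := Finset.card_pos.mp (by
              rw [Finset.card_erase_of_mem hQS]; omega)
            obtain ⟨H₀, hH₀⟩ := this
            have hx0 : x ∈ LL ∩ H₀ := Finset.mem_inter.mpr ⟨hxP, hxall H₀ hH₀⟩
            have hd := hdom H₀ (Finset.mem_insert_of_mem (Finset.mem_of_mem_erase hH₀))
              (fun h => hPS (h ▸ (Finset.mem_of_mem_erase hH₀))) hx0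
            exact (Finset.mem_inter.mp hd).2
          · exact hxall H (Finset.mem_erase.mpr ⟨hHQ, hH⟩)
      · -- LL ∈ S
        have hLP : LL ≠ P := fun h => hPS (h ▸ hLS)
        rcases hQΓ with hQP | hQS
        · -- QQ = P : switch ambient facet to LL
          have hpw' : ∀ H ∈ S.erase LL, ∀ H' ∈ S.erase LL, H ≠ H' →
              (LL ∩ H ∩ H').Nonempty := by
            intro H hH H' hH' hne'
            rw [Finset.mem_erase] at hH hH'
            -- use the triple lemma inside {LL, H, H'}
            have t1 : (LL ∩ H).Nonempty := by
              obtain ⟨z, hz⟩ := hpw LL hLS H hH.2 (Ne.symm hH.1)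
              rw [Finset.mem_inter, Finset.mem_inter] at hz
              exact ⟨z, Finset.mem_inter.mpr ⟨hz.1.2, hz.2⟩⟩
            have t2 : (LL ∩ H').Nonempty := by
              obtain ⟨z, hz⟩ := hpw LL hLS H' hH'.2 (Ne.symm hH'.1)
              rw [Finset.mem_inter, Finset.mem_inter] at hz
              exact ⟨z, Finset.mem_inter.mpr ⟨hz.1.2, hz.2⟩⟩
            have t3 : (H ∩ H').Nonempty := by
              obtain ⟨z, hz⟩ := hpw H hH.2 H' hH'.2 hne'
              rw [Finset.mem_inter, Finset.mem_inter] at hz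
              exact ⟨z, Finset.mem_inter.mpr ⟨hz.1.2, hz.2⟩⟩
            exact triple_lemma hfor (hsub hLS) (hsub hH.2) (hsub hH'.2)
              (Ne.symm hH.1) (Ne.symm hH'.1) hne' t1 t2 t3
          have htr' : ∀ H ∈ S.erase LL, (LL ∩ H).Nonempty := by
            intro H hH
            rw [Finset.mem_erase] at hH
            obtain ⟨z, hz⟩ := hpw LL hLS H hH.2 (Ne.symm hH.1)
            rw [Finset.mem_inter, Finset.mem_inter] at hz
            exact ⟨z, Finset.mem_inter.mpr ⟨hz.1.2, hz.2⟩⟩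
          have hrec := ih (S.erase LL) LL (by rw [Finset.card_erase_of_mem hLS]; omega)
            ((Finset.erase_subset LL S).trans hsub) (hsub hLS)
            (Finset.notMem_erase LL S) htr' hpw'
          obtain ⟨x, hxL, hxall⟩ := hrec
          -- x ∈ P via leaf property
          have : (S.erase LL).Nonempty := Finset.card_pos.mp (by
            rw [Finset.card_erase_of_mem hLS]; omega)
          obtain ⟨H₀, hH₀⟩ := this
          have hH₀S := Finset.mem_of_mem_erase hH₀
          have hx0 : x ∈ LL ∩ H₀ := Finset.mem_inter.mpr ⟨hxL, hxall H₀ hH₀⟩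
          have hd := hdom H₀ (Finset.mem_insert_of_mem hH₀S)
            (fun h => (Finset.mem_erase.mp hH₀).1 h) hx0
          have hxP : x ∈ P := by
            have hd' := hd
            rw [hQP, Finset.mem_inter] at hd'
            -- LL ∩ H₀ ⊆ LL ∩ QQ with QQ = P
            exact hd'.2
          refine ⟨x, hxP, ?_⟩
          intro H hH
          by_cases hHL : H = LL
          · exact hHL ▸ hxL
          · exact hxall H (Finset.mem_erase.mpr ⟨hHL, hH⟩)
        · -- QQ ∈ S : recurse on S.erase QQ with same P
          have hrec := ih (S.erase QQ) P (by rw [Finset.card_erase_of_mem hQS]; omega)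
            ((Finset.erase_subset QQ S).trans hsub) hP
            (fun h => hPS (Finset.mem_of_mem_erase h))
            (fun H hH => htr H (Finset.mem_of_mem_erase hH))
            (fun H hH H' hH' hne' => hpw H (Finset.mem_of_mem_erase hH)
              H' (Finset.mem_of_mem_erase hH') hne')
          obtain ⟨x, hxP, hxall⟩ := hrec
          refine ⟨x, hxP, ?_⟩
          intro H hH
          by_cases hHQ : H = QQ
          · rw [hHQ]
            have hLe : LL ∈ S.erase QQ := Finset.mem_erase.mpr
              (⟨fun h => hQL h.symm, hLS⟩)
            have hxL : x ∈ LL := hxall LL hLe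
            have hxLP : x ∈ LL ∩ P := Finset.mem_inter.mpr ⟨hxL, hxP⟩
            have hd := hdom P (Finset.mem_insert_self P S) (Ne.symm hLP) hxLP
            exact (Finset.mem_inter.mp hd).2
          · exact hxall H (Finset.mem_erase.mpr ⟨hHQ, hH⟩)

end TripleHelly
section Theta

variable {Δ : Finset (Finset α)}

/-- if L has empty intersection with every other member, chains avoid it -/
lemma reach_avoid {T : Finset (Finset α)} {L s t : Finset α}
    (hnb : ∀ F' ∈ T, F' ≠ L → L ∩ F' = ∅) (hsL : s ≠ L)
    (h : FReach T s t) : FReach (T.erase L) s t := by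
  classical
  have key : ∀ X, FReach T s X → X ≠ L ∧ FReach (T.erase L) s X := by
    intro X hX
    induction hX with
    | refl => exact ⟨hsL, Relation.ReflTransGen.refl⟩
    | @tail y x hsy hyx ih =>
      obtain ⟨hyL, hreach⟩ := ih
      obtain ⟨hxy, hyT, hxT, hint⟩ := hyx
      have hxL : x ≠ L := by
        rintro rfl
        have := hnb y hyT hyL
        rw [Finset.inter_comm] at this
        rw [this] at hint
        exact absurd hint (by simp)
      refine ⟨hxL, hreach.tail ⟨hxy, ?_, ?_, hint⟩⟩
      · exact Finset.mem_erase.mpr ⟨hyL, hyT⟩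
      · exact Finset.mem_erase.mpr ⟨hxL, hxT⟩
  exact (key t h).2

/-- rerouting a chain around a leaf L through its joint Q -/
lemma reach_reroute {T : Finset (Finset α)} {L Q s t : Finset α}
    (hQT : Q ∈ T.erase L)
    (hdom : ∀ F' ∈ T, F' ≠ L → L ∩ F' ⊆ L ∩ Q)
    (hsL : s ≠ L) (htL : t ≠ L)
    (h : FReach T s t) : FReach (T.erase L) s t := by
  classical
  have key : ∀ X, FReach T s X →
      (X = L → FReach (T.erase L) s Q) ∧ (X ≠ L → FReach (T.erase L) s X) := by
    intro X hX
    induction hX with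
    | refl =>
      refine ⟨fun h' => absurd h'.symm (Ne.symm hsL), fun _ => Relation.ReflTransGen.refl⟩
    | @tail y x hsy hyx ih =>
      obtain ⟨hxy, hyT, hxT, hint⟩ := hyx
      by_cases hxL : x = L
      · refine ⟨fun _ => ?_, fun h' => absurd hxL h'⟩
        have hyL : y ≠ L := fun h' => hxy (h'.trans hxL.symm)
        have hreach := ih.2 hyL
        have hyQ : (y ∩ Q).Nonempty := by
          obtain ⟨z, hz⟩ := hint
          rw [Finset.mem_inter] at hz
          have := hdom y hyT hyL (Finset.mem_inter.mpr ⟨hxL ▸ hz.2, hz.1⟩)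
          rw [Finset.mem_inter] at this
          exact ⟨z, Finset.mem_inter.mpr ⟨hz.1, this.2⟩⟩
        by_cases hyQ' : y = Q
        · exact hyQ' ▸ hreach
        · exact hreach.tail ⟨hyQ', Finset.mem_erase.mpr ⟨hyL, hyT⟩, hQT, hyQ⟩
      · refine ⟨fun h' => absurd h' hxL, fun _ => ?_⟩
        by_cases hyL : y = L
        · have hreach := ih.1 hyL
          have hQx : (Q ∩ x).Nonempty := by
            obtain ⟨z, hz⟩ := hint
            rw [Finset.mem_inter] at hz
            have := hdom x hxT hxL (Finset.mem_inter.mpr ⟨hyL ▸ hz.1, hz.2⟩)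
            rw [Finset.mem_inter] at this
            exact ⟨z, Finset.mem_inter.mpr ⟨this.2, hz.2⟩⟩
          by_cases hQx' : Q = x
          · exact hQx' ▸ hreach
          · exact hreach.tail ⟨hQx', hQT, Finset.mem_erase.mpr ⟨hxL, hxT⟩, hQx⟩
        · exact (ih.2 hyL).tail
            ⟨hxy, Finset.mem_erase.mpr ⟨hyL, hyT⟩, Finset.mem_erase.mpr ⟨hxL, hxT⟩, hint⟩
  exact (key t h).2 htL

/-- first step of a nontrivial chain out of `s` -/
lemma first_step {T : Finset (Finset α)} {s t : Finset α} (hst : s ≠ t)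
    (h : FReach T s t) : ∃ Z, Z ≠ s ∧ Z ∈ T ∧ (s ∩ Z).Nonempty := by
  rcases Relation.ReflTransGen.cases_head h with heq | ⟨c, hc, _⟩
  · exact absurd heq hst
  · exact ⟨c, fun h' => hc.1 h'.symm, hc.2.2.1, hc.2.2.2⟩

/-- A "theta configuration" is impossible in a forest. -/
lemma no_theta (hfor : IsForest Δ) {s t : Finset α} {CA CB : Finset (Finset α)}
    (hCA : CA ⊆ Δ) (hCB : CB ⊆ Δ) (hsΔ : s ∈ Δ) (htΔ : t ∈ Δ)
    (hst : s ≠ t) (hdisj : s ∩ t = ∅)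
    (hsCA : s ∉ CA) (htCA : t ∉ CA) (hsCB : s ∉ CB) (htCB : t ∉ CB)
    (hcross : ∀ X ∈ CA, ∀ Y ∈ CB, X ∩ Y = ∅)
    (h1 : FReach (insert s (insert t CA)) s t)
    (h2 : FReach (insert s (insert t CB)) s t) : False := by
  classical
  have hne1 : (CA.powerset.filter (fun Γ => FReach (insert s (insert t Γ)) s t)).Nonempty :=
    ⟨CA, Finset.mem_filter.mpr ⟨Finset.mem_powerset.mpr (Finset.Subset.refl CA), h1⟩⟩
  obtain ⟨Γ₁, hΓ₁mem, hΓ₁min⟩ := Finset.exists_min_image _ Finset.card hne1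
  rw [Finset.mem_filter, Finset.mem_powerset] at hΓ₁mem
  obtain ⟨hΓ₁CA, hΓ₁reach⟩ := hΓ₁mem
  have hne2 : (CB.powerset.filter (fun Γ => FReach (insert s (insert t Γ)) s t)).Nonempty :=
    ⟨CB, Finset.mem_filter.mpr ⟨Finset.mem_powerset.mpr (Finset.Subset.refl CB), h2⟩⟩
  obtain ⟨Γ₂, hΓ₂mem, hΓ₂min⟩ := Finset.exists_min_image _ Finset.card hne2
  rw [Finset.mem_filter, Finset.mem_powerset] at hΓ₂mem
  obtain ⟨hΓ₂CB, hΓ₂reach⟩ := hΓ₂mem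
  set Φ : Finset (Finset α) := insert s (insert t (Γ₁ ∪ Γ₂)) with hΦ
  have hΦsub : Φ ⊆ Δ := by
    intro X hX
    rw [hΦ, Finset.mem_insert, Finset.mem_insert, Finset.mem_union] at hX
    rcases hX with rfl | rfl | hX | hX
    · exact hsΔ
    · exact htΔ
    · exact hCA (hΓ₁CA hX)
    · exact hCB (hΓ₂CB hX)
  have hsΦ : s ∈ Φ := by simp [hΦ]
  have htΦ : t ∈ Φ := by simp [hΦ]
  obtain ⟨L, hLΦ, Q, hQΦ, hQL, hdom⟩ := get_leaf hfor hΦsub hsΦ htΦ hst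
  have hT1sub : insert s (insert t Γ₁) ⊆ Φ := by
    intro X hX
    rw [Finset.mem_insert, Finset.mem_insert] at hX
    rw [hΦ, Finset.mem_insert, Finset.mem_insert, Finset.mem_union]
    tauto
  have hT2sub : insert s (insert t Γ₂) ⊆ Φ := by
    intro X hX
    rw [Finset.mem_insert, Finset.mem_insert] at hX
    rw [hΦ, Finset.mem_insert, Finset.mem_insert, Finset.mem_union]
    tauto
  have hcross' : ∀ X ∈ CB, ∀ Y ∈ CA, X ∩ Y = ∅ := by
    intro X hX Y hY
    rw [Finset.inter_comm]
    exact hcross Y hY X hX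
  -- generic killer for the case L ∈ Γᵢ
  have hkill : ∀ (Γ C : Finset (Finset α)), Γ ⊆ C →
      FReach (insert s (insert t Γ)) s t →
      (∀ Γ' ∈ C.powerset.filter (fun Γ' => FReach (insert s (insert t Γ')) s t),
        Γ.card ≤ Γ'.card) →
      insert s (insert t Γ) ⊆ Φ →
      L ∈ Γ → s ∉ C → t ∉ C →
      (Q ∈ (insert s (insert t Γ)).erase L ∨ L ∩ Q = ∅) → False := by
    intro Γ C hΓC hreach hmin hTsub hLΓ hsC htC hQcase
    have hsL : s ≠ L := fun h => hsC (hΓC (h ▸ hLΓ))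
    have htL : t ≠ L := fun h => htC (hΓC (h ▸ hLΓ))
    have hsmaller0 : FReach ((insert s (insert t Γ)).erase L) s t := by
      rcases hQcase with hQmem | hQempty
      · refine reach_reroute hQmem ?_ hsL htL hreach
        intro F' hF' hF'L
        exact hdom F' (hTsub hF') hF'L
      · refine reach_avoid ?_ hsL hreach
        intro F' hF' hF'L
        have := hdom F' (hTsub hF') hF'L
        rw [hQempty] at this
        exact Finset.subset_empty.mp this
    have hsmaller : FReach (insert s (insert t (Γ.erase L))) s t := by
      refine freach_mono ?_ hsmaller0
      intro X hX
      rw [Finset.mem_erase, Finset.mem_insert, Finset.mem_insert] at hX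
      rw [Finset.mem_insert, Finset.mem_insert]
      rcases hX.2 with rfl | rfl | hXΓ
      · exact Or.inl rfl
      · exact Or.inr (Or.inl rfl)
      · exact Or.inr (Or.inr (Finset.mem_erase.mpr ⟨hX.1, hXΓ⟩))
    have hle : Γ.card ≤ (Γ.erase L).card := hmin (Γ.erase L) (Finset.mem_filter.mpr
      ⟨Finset.mem_powerset.mpr ((Finset.erase_subset L Γ).trans hΓC), hsmaller⟩)
    rw [Finset.card_erase_of_mem hLΓ] at hle
    have hpos : 0 < Γ.card := Finset.card_pos.mpr ⟨L, hLΓ⟩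
    omega
  rw [hΦ, Finset.mem_insert, Finset.mem_insert, Finset.mem_union] at hLΦ
  rcases hLΦ with hLs | hLt | hLΓ₁ | hLΓ₂
  · -- L = s
    rw [hLs] at hdom hQL
    obtain ⟨Z₁, hZ₁s, hZ₁mem, hZ₁int⟩ := first_step hst hΓ₁reach
    obtain ⟨Z₂, hZ₂s, hZ₂mem, hZ₂int⟩ := first_step hst hΓ₂reach
    rw [Finset.mem_insert, Finset.mem_insert] at hZ₁mem hZ₂mem
    have hZ₁Γ : Z₁ ∈ Γ₁ := by
      rcases hZ₁mem with rfl | rfl | h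
      · exact absurd rfl hZ₁s
      · rw [hdisj] at hZ₁int; exact absurd hZ₁int (by simp)
      · exact h
    have hZ₂Γ : Z₂ ∈ Γ₂ := by
      rcases hZ₂mem with rfl | rfl | h
      · exact absurd rfl hZ₂s
      · rw [hdisj] at hZ₂int; exact absurd hZ₂int (by simp)
      · exact h
    have hd₁ := hdom Z₁ (hT1sub (Finset.mem_insert_of_mem (Finset.mem_insert_of_mem hZ₁Γ)))
      (fun h => hsCA (hΓ₁CA (h ▸ hZ₁Γ)))
    have hd₂ := hdom Z₂ (hT2sub (Finset.mem_insert_of_mem (Finset.mem_insert_of_mem hZ₂Γ)))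
      (fun h => hsCB (hΓ₂CB (h ▸ hZ₂Γ)))
    rw [hΦ, Finset.mem_insert, Finset.mem_insert, Finset.mem_union] at hQΦ
    rcases hQΦ with hQs | hQt | hQΓ₁ | hQΓ₂
    · exact hQL hQs
    · obtain ⟨z, hz⟩ := hZ₁int
      have hz2 := hd₁ hz
      rw [hQt, Finset.mem_inter] at hz2
      have : z ∈ s ∩ t := Finset.mem_inter.mpr ⟨(Finset.mem_inter.mp hz).1, hz2.2⟩
      rw [hdisj] at this
      simp at this
    · obtain ⟨z, hz⟩ := hZ₂int
      have hzQ := hd₂ hz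
      rw [Finset.mem_inter] at hzQ hz
      have : z ∈ Q ∩ Z₂ := Finset.mem_inter.mpr ⟨hzQ.2, hz.2⟩
      rw [hcross Q (hΓ₁CA hQΓ₁) Z₂ (hΓ₂CB hZ₂Γ)] at this
      simp at this
    · obtain ⟨z, hz⟩ := hZ₁int
      have hzQ := hd₁ hz
      rw [Finset.mem_inter] at hzQ hz
      have : z ∈ Q ∩ Z₁ := Finset.mem_inter.mpr ⟨hzQ.2, hz.2⟩
      rw [hcross' Q (hΓ₂CB hQΓ₂) Z₁ (hΓ₁CA hZ₁Γ)] at this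
      simp at this
  · -- L = t
    rw [hLt] at hdom hQL
    have hΓ₁reach' : FReach (insert s (insert t Γ₁)) t s := freach_symm hΓ₁reach
    have hΓ₂reach' : FReach (insert s (insert t Γ₂)) t s := freach_symm hΓ₂reach
    obtain ⟨Z₁, hZ₁t, hZ₁mem, hZ₁int⟩ := first_step (Ne.symm hst) hΓ₁reach'
    obtain ⟨Z₂, hZ₂t, hZ₂mem, hZ₂int⟩ := first_step (Ne.symm hst) hΓ₂reach'
    rw [Finset.mem_insert, Finset.mem_insert] at hZ₁mem hZ₂mem
    have hZ₁Γ : Z₁ ∈ Γ₁ := by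
      rcases hZ₁mem with rfl | rfl | h
      · rw [Finset.inter_comm, hdisj] at hZ₁int; exact absurd hZ₁int (by simp)
      · exact absurd rfl hZ₁t
      · exact h
    have hZ₂Γ : Z₂ ∈ Γ₂ := by
      rcases hZ₂mem with rfl | rfl | h
      · rw [Finset.inter_comm, hdisj] at hZ₂int; exact absurd hZ₂int (by simp)
      · exact absurd rfl hZ₂t
      · exact h
    have hd₁ := hdom Z₁ (hT1sub (Finset.mem_insert_of_mem (Finset.mem_insert_of_mem hZ₁Γ)))
      (fun h => htCA (hΓ₁CA (h ▸ hZ₁Γ)))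
    have hd₂ := hdom Z₂ (hT2sub (Finset.mem_insert_of_mem (Finset.mem_insert_of_mem hZ₂Γ)))
      (fun h => htCB (hΓ₂CB (h ▸ hZ₂Γ)))
    rw [hΦ, Finset.mem_insert, Finset.mem_insert, Finset.mem_union] at hQΦ
    rcases hQΦ with hQs | hQt | hQΓ₁ | hQΓ₂
    · obtain ⟨z, hz⟩ := hZ₁int
      have hz2 := hd₁ hz
      rw [hQs, Finset.mem_inter] at hz2
      have : z ∈ s ∩ t := Finset.mem_inter.mpr ⟨hz2.2, (Finset.mem_inter.mp hz).1⟩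
      rw [hdisj] at this
      simp at this
    · exact hQL hQt
    · obtain ⟨z, hz⟩ := hZ₂int
      have hzQ := hd₂ hz
      rw [Finset.mem_inter] at hzQ hz
      have : z ∈ Q ∩ Z₂ := Finset.mem_inter.mpr ⟨hzQ.2, hz.2⟩
      rw [hcross Q (hΓ₁CA hQΓ₁) Z₂ (hΓ₂CB hZ₂Γ)] at this
      simp at this
    · obtain ⟨z, hz⟩ := hZ₁int
      have hzQ := hd₁ hz
      rw [Finset.mem_inter] at hzQ hz
      have : z ∈ Q ∩ Z₁ := Finset.mem_inter.mpr ⟨hzQ.2, hz.2⟩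
      rw [hcross' Q (hΓ₂CB hQΓ₂) Z₁ (hΓ₁CA hZ₁Γ)] at this
      simp at this
  · -- L ∈ Γ₁
    refine hkill Γ₁ CA hΓ₁CA hΓ₁reach hΓ₁min hT1sub hLΓ₁ hsCA htCA ?_
    by_cases hLQ : (L ∩ Q).Nonempty
    · left
      refine Finset.mem_erase.mpr ⟨hQL, ?_⟩
      rw [Finset.mem_insert, Finset.mem_insert]
      rw [hΦ, Finset.mem_insert, Finset.mem_insert, Finset.mem_union] at hQΦ
      rcases hQΦ with hQs | hQt | hQΓ₁ | hQΓ₂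
      · exact Or.inl hQs
      · exact Or.inr (Or.inl hQt)
      · exact Or.inr (Or.inr hQΓ₁)
      · exfalso
        obtain ⟨z, hz⟩ := hLQ
        rw [Finset.mem_inter] at hz
        have : z ∈ L ∩ Q := Finset.mem_inter.mpr hz
        rw [hcross L (hΓ₁CA hLΓ₁) Q (hΓ₂CB hQΓ₂)] at this
        simp at this
    · right
      exact Finset.not_nonempty_iff_eq_empty.mp hLQ
  · -- L ∈ Γ₂
    refine hkill Γ₂ CB hΓ₂CB hΓ₂reach hΓ₂min hT2sub hLΓ₂ hsCB htCB ?_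
    by_cases hLQ : (L ∩ Q).Nonempty
    · left
      refine Finset.mem_erase.mpr ⟨hQL, ?_⟩
      rw [Finset.mem_insert, Finset.mem_insert]
      rw [hΦ, Finset.mem_insert, Finset.mem_insert, Finset.mem_union] at hQΦ
      rcases hQΦ with hQs | hQt | hQΓ₁ | hQΓ₂
      · exact Or.inl hQs
      · exact Or.inr (Or.inl hQt)
      · exfalso
        obtain ⟨z, hz⟩ := hLQ
        rw [Finset.mem_inter] at hz
        have : z ∈ Q ∩ L := Finset.mem_inter.mpr ⟨hz.2, hz.1⟩
        rw [hcross Q (hΓ₁CA hQΓ₁) L (hΓ₂CB hLΓ₂)] at this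
        simp at this
      · exact Or.inr (Or.inr hQΓ₂)
    · right
      exact Finset.not_nonempty_iff_eq_empty.mp hLQ

end Theta
section Dirac

variable {Δ : Finset (Finset α)}

/-- the neighbors of F pairwise intersect -/
def GoodNbr (Δ : Finset (Finset α)) (F : Finset α) : Prop :=
  ∀ H ∈ Δ, H ≠ F → (H ∩ F).Nonempty → ∀ H' ∈ Δ, H' ≠ F → (H' ∩ F).Nonempty →
    H ≠ H' → (H ∩ H').Nonempty

lemma goodnbr_of_subset {Γ : Finset (Finset α)} {F : Finset α}
    (hclosed : ∀ H ∈ Δ, H ≠ F → (H ∩ F).Nonempty → H ∈ Γ)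
    (hgood : GoodNbr Γ F) : GoodNbr Δ F := by
  intro H hH hHF hHFne H' hH' hH'F hH'Fne hne
  exact hgood H (hclosed H hH hHF hHFne) hHF hHFne
    H' (hclosed H' hH' hH'F hH'Fne) hH'F hH'Fne hne

/-- Dirac-type theorem: a forest containing two disjoint facets has two
disjoint facets with pairwise-intersecting neighborhoods. -/
lemma dirac : ∀ (n : ℕ) (Δ : Finset (Finset α)), Δ.card ≤ n → IsForest Δ →
    (∀ F ∈ Δ, F.Nonempty) → ∀ A ∈ Δ, ∀ B ∈ Δ, A ≠ B → A ∩ B = ∅ →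
    ∃ F₁ ∈ Δ, ∃ F₂ ∈ Δ, GoodNbr Δ F₁ ∧ GoodNbr Δ F₂ ∧ F₁ ≠ F₂ ∧ F₁ ∩ F₂ = ∅ := by
  classical
  intro n
  induction n with
  | zero =>
    intro Δ hcard _ _ A hA B _ _ _
    rw [Nat.le_zero, Finset.card_eq_zero] at hcard
    subst hcard
    simp at hA
  | succ n ih =>
    intro Δ hcard hfor hne A hA B hB hAB hABdisj
    -- a separator of minimum cardinality
    have hsep₀ : ¬ FReach ((Δ \ (Δ \ {A, B})) : Finset (Finset α)) A B := by
      intro h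
      have hsub : (Δ \ (Δ \ {A, B}) : Finset (Finset α)) ⊆ {A, B} := by
        intro X hX
        rw [Finset.mem_sdiff, Finset.mem_sdiff] at hX
        by_contra hX'
        exact hX.2 ⟨hX.1, hX'⟩
      have := freach_in_pair hABdisj (freach_mono hsub h)
      exact hAB this.symm
    have hSne : ((Δ \ {A, B}).powerset.filter
        (fun T => ¬ FReach ((Δ \ T) : Finset (Finset α)) A B)).Nonempty :=
      ⟨Δ \ {A, B}, Finset.mem_filter.mpr
        ⟨Finset.mem_powerset.mpr (Finset.Subset.refl _), hsep₀⟩⟩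
    obtain ⟨S, hSmem, hSmin⟩ := Finset.exists_min_image _ Finset.card hSne
    rw [Finset.mem_filter, Finset.mem_powerset] at hSmem
    obtain ⟨hSsub, hSsep⟩ := hSmem
    have hSΔ : S ⊆ Δ := hSsub.trans (Finset.sdiff_subset)
    have hAS : A ∉ S := fun h => by simpa using (hSsub h)
    have hBS : B ∉ S := fun h => by simpa using (hSsub h)
    -- the two components
    set CA : Finset (Finset α) :=
      (Δ \ S).filter (fun X => FReach ((Δ \ S) : Finset (Finset α)) A X) with hCAdef
    set CB : Finset (Finset α) :=
      (Δ \ S).filter (fun X => FReach ((Δ \ S) : Finset (Finset α)) B X) with hCBdef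
    have hACA : A ∈ CA := by
      rw [hCAdef, Finset.mem_filter]
      exact ⟨Finset.mem_sdiff.mpr ⟨hA, hAS⟩, Relation.ReflTransGen.refl⟩
    have hBCB : B ∈ CB := by
      rw [hCBdef, Finset.mem_filter]
      exact ⟨Finset.mem_sdiff.mpr ⟨hB, hBS⟩, Relation.ReflTransGen.refl⟩
    have hCAsub : CA ⊆ Δ := by
      intro X hX
      rw [hCAdef, Finset.mem_filter, Finset.mem_sdiff] at hX
      exact hX.1.1
    have hCBsub : CB ⊆ Δ := by
      intro X hX
      rw [hCBdef, Finset.mem_filter, Finset.mem_sdiff] at hX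
      exact hX.1.1
    have hCAS : ∀ X ∈ CA, X ∉ S := by
      intro X hX
      rw [hCAdef, Finset.mem_filter, Finset.mem_sdiff] at hX
      exact hX.1.2
    have hCBS : ∀ X ∈ CB, X ∉ S := by
      intro X hX
      rw [hCBdef, Finset.mem_filter, Finset.mem_sdiff] at hX
      exact hX.1.2
    have hclosedA : ∀ X ∈ CA, ∀ Y ∈ (Δ \ S : Finset (Finset α)), X ≠ Y →
        (X ∩ Y).Nonempty → Y ∈ CA := by
      intro X hX Y hY hXY hint
      rw [hCAdef, Finset.mem_filter] at hX ⊢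
      exact ⟨hY, hX.2.tail ⟨hXY, hX.1, hY, hint⟩⟩
    have hclosedB : ∀ X ∈ CB, ∀ Y ∈ (Δ \ S : Finset (Finset α)), X ≠ Y →
        (X ∩ Y).Nonempty → Y ∈ CB := by
      intro X hX Y hY hXY hint
      rw [hCBdef, Finset.mem_filter] at hX ⊢
      exact ⟨hY, hX.2.tail ⟨hXY, hX.1, hY, hint⟩⟩
    have hBCA : B ∉ CA := by
      intro h
      rw [hCAdef, Finset.mem_filter] at h
      exact hSsep h.2
    have hACB : A ∉ CB := by
      intro h
      rw [hCBdef, Finset.mem_filter] at h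
      exact hSsep (freach_symm h.2)
    have hcross : ∀ X ∈ CA, ∀ Y ∈ CB, X ∩ Y = ∅ := by
      intro X hX Y hY
      by_contra hne'
      rw [← Ne, ← Finset.nonempty_iff_ne_empty] at hne'
      have hYCA : Y ∈ CA := by
        by_cases hXY : X = Y
        · exact hXY ▸ hX
        · refine hclosedA X hX Y ?_ hXY hne'
          rw [hCBdef, Finset.mem_filter] at hY
          exact hY.1
      rw [hCAdef, Finset.mem_filter] at hYCA
      rw [hCBdef, Finset.mem_filter] at hY
      exact hSsep (hYCA.2.trans (freach_symm hY.2))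
    -- the separator is a clique
    have hSclique : ∀ s ∈ S, ∀ t ∈ S, s ≠ t → (s ∩ t).Nonempty := by
      intro s hs t ht hst
      by_contra h0
      rw [Finset.not_nonempty_iff_eq_empty] at h0
      -- every separator vertex has neighbors in both components
      have hnbr : ∀ u ∈ S, (∃ X ∈ CA, (X ∩ u).Nonempty) ∧
          (∃ X ∈ CB, (X ∩ u).Nonempty) := by
        intro u hu
        have hreach' : FReach ((Δ \ (S.erase u)) : Finset (Finset α)) A B := by
          by_contra hre
          have hmem : S.erase u ∈ (Δ \ {A, B}).powerset.filter
              (fun T => ¬ FReach ((Δ \ T) : Finset (Finset α)) A B) :=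
            Finset.mem_filter.mpr
              ⟨Finset.mem_powerset.mpr ((Finset.erase_subset u S).trans hSsub), hre⟩
          have := hSmin _ hmem
          rw [Finset.card_erase_of_mem hu] at this
          have hpos : 0 < S.card := Finset.card_pos.mpr ⟨u, hu⟩
          omega
        have hsubsdiff : ∀ {Y : Finset α}, Y ∈ (Δ \ (S.erase u) : Finset (Finset α)) →
            Y ∉ S → Y ∈ (Δ \ S : Finset (Finset α)) := by
          intro Y hY hYS
          rw [Finset.mem_sdiff] at hY ⊢
          exact ⟨hY.1, hYS⟩
        constructor
        · obtain ⟨X, Y, hstep, hXCA, hYnCA⟩ := freach_cross hreach' hACA hBCA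
          obtain ⟨hXY, hXT, hYT, hint⟩ := hstep
          have hYu : Y = u := by
            by_contra hYu
            have hYS : Y ∈ S := by
              by_contra hYS
              exact hYnCA (hclosedA X hXCA Y (hsubsdiff hYT hYS) hXY hint)
            rw [Finset.mem_sdiff, Finset.mem_erase] at hYT
            exact hYT.2 ⟨hYu, hYS⟩
          exact ⟨X, hXCA, hYu ▸ hint⟩
        · obtain ⟨X, Y, hstep, hXCB, hYnCB⟩ :=
            freach_cross (freach_symm hreach') hBCB hACB
          obtain ⟨hXY, hXT, hYT, hint⟩ := hstep
          have hYu : Y = u := by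
            by_contra hYu
            have hYS : Y ∈ S := by
              by_contra hYS
              exact hYnCB (hclosedB X hXCB Y (hsubsdiff hYT hYS) hXY hint)
            rw [Finset.mem_sdiff, Finset.mem_erase] at hYT
            exact hYT.2 ⟨hYu, hYS⟩
          exact ⟨X, hXCB, hYu ▸ hint⟩
      obtain ⟨⟨XsA, hXsA, hXsAint⟩, ⟨XsB, hXsB, hXsBint⟩⟩ := hnbr s hs
      obtain ⟨⟨XtA, hXtA, hXtAint⟩, ⟨XtB, hXtB, hXtBint⟩⟩ := hnbr t ht
      -- internal connectivity of the components
      have hinternalA : ∀ X, FReach ((Δ \ S) : Finset (Finset α)) A X →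
          X ∈ CA ∧ FReach CA A X := by
        intro X hX
        induction hX with
        | refl => exact ⟨hACA, Relation.ReflTransGen.refl⟩
        | @tail y x hay hyx ih =>
          obtain ⟨hyCA, hreach⟩ := ih
          obtain ⟨hxy, hyT, hxT, hint⟩ := hyx
          have hxCA : x ∈ CA := hclosedA y hyCA x hxT hxy hint
          exact ⟨hxCA, hreach.tail ⟨hxy, hyCA, hxCA, hint⟩⟩
      have hinternalB : ∀ X, FReach ((Δ \ S) : Finset (Finset α)) B X →
          X ∈ CB ∧ FReach CB B X := by
        intro X hX
        induction hX with
        | refl => exact ⟨hBCB, Relation.ReflTransGen.refl⟩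
        | @tail y x hay hyx ih =>
          obtain ⟨hyCB, hreach⟩ := ih
          obtain ⟨hxy, hyT, hxT, hint⟩ := hyx
          have hxCB : x ∈ CB := hclosedB y hyCB x hxT hxy hint
          exact ⟨hxCB, hreach.tail ⟨hxy, hyCB, hxCB, hint⟩⟩
      have hreachCA : ∀ X ∈ CA, ∀ Y ∈ CA, FReach CA X Y := by
        intro X hX Y hY
        rw [hCAdef, Finset.mem_filter] at hX hY
        exact (freach_symm (hinternalA X hX.2).2).trans (hinternalA Y hY.2).2
      have hreachCB : ∀ X ∈ CB, ∀ Y ∈ CB, FReach CB X Y := by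
        intro X hX Y hY
        rw [hCBdef, Finset.mem_filter] at hX hY
        exact (freach_symm (hinternalB X hX.2).2).trans (hinternalB Y hY.2).2
      -- the two chains of the theta configuration
      have hsSCA : s ∉ CA := fun h => hCAS s h hs
      have htSCA : t ∉ CA := fun h => hCAS t h ht
      have hsSCB : s ∉ CB := fun h => hCBS s h hs
      have htSCB : t ∉ CB := fun h => hCBS t h ht
      have h1 : FReach (insert s (insert t CA)) s t := by
        have hstep1 : FStep (insert s (insert t CA)) s XsA := by
          refine ⟨fun h => hsSCA (h ▸ hXsA), Finset.mem_insert_self _ _,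
            Finset.mem_insert_of_mem (Finset.mem_insert_of_mem hXsA), ?_⟩
          obtain ⟨z, hz⟩ := hXsAint
          rw [Finset.mem_inter] at hz
          exact ⟨z, Finset.mem_inter.mpr ⟨hz.2, hz.1⟩⟩
        have hstep2 : FStep (insert s (insert t CA)) XtA t := by
          refine ⟨fun h => htSCA (h ▸ hXtA),
            Finset.mem_insert_of_mem (Finset.mem_insert_of_mem hXtA),
            Finset.mem_insert_of_mem (Finset.mem_insert_self _ _), hXtAint⟩
        have hmid : FReach (insert s (insert t CA)) XsA XtA :=
          freach_mono (fun X hX => Finset.mem_insert_of_mem (Finset.mem_insert_of_mem hX))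
            (hreachCA XsA hXsA XtA hXtA)
        exact ((Relation.ReflTransGen.single hstep1).trans hmid).tail hstep2
      have h2 : FReach (insert s (insert t CB)) s t := by
        have hstep1 : FStep (insert s (insert t CB)) s XsB := by
          refine ⟨fun h => hsSCB (h ▸ hXsB), Finset.mem_insert_self _ _,
            Finset.mem_insert_of_mem (Finset.mem_insert_of_mem hXsB), ?_⟩
          obtain ⟨z, hz⟩ := hXsBint
          rw [Finset.mem_inter] at hz
          exact ⟨z, Finset.mem_inter.mpr ⟨hz.2, hz.1⟩⟩
        have hstep2 : FStep (insert s (insert t CB)) XtB t := by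
          refine ⟨fun h => htSCB (h ▸ hXtB),
            Finset.mem_insert_of_mem (Finset.mem_insert_of_mem hXtB),
            Finset.mem_insert_of_mem (Finset.mem_insert_self _ _), hXtBint⟩
        have hmid : FReach (insert s (insert t CB)) XsB XtB :=
          freach_mono (fun X hX => Finset.mem_insert_of_mem (Finset.mem_insert_of_mem hX))
            (hreachCB XsB hXsB XtB hXtB)
        exact ((Relation.ReflTransGen.single hstep1).trans hmid).tail hstep2
      exact no_theta hfor hCAsub hCBsub (hSΔ hs) (hSΔ ht) hst h0
        hsSCA htSCA hsSCB htSCB hcross h1 h2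
    -- now recurse on the two sides
    have hmain : ∀ (CC : Finset (Finset α)) (W R : Finset α), CC ⊆ Δ → W ∈ CC →
        R ∈ Δ → R ∉ CC → R ∉ S →
        (∀ X ∈ CC, ∀ Y ∈ (Δ \ S : Finset (Finset α)), X ≠ Y →
          (X ∩ Y).Nonempty → Y ∈ CC) →
        (∀ X ∈ CC, X ∉ S) →
        ∃ F₀ ∈ CC, GoodNbr Δ F₀ := by
      intro CC W R hCCsub hWCC hRΔ hRCC hRS hCCclosed hCCS
      set ΔC : Finset (Finset α) := CC ∪ S with hΔCdef
      have hΔCsub : ΔC ⊆ Δ := by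
        intro X hX
        rw [hΔCdef, Finset.mem_union] at hX
        rcases hX with hX | hX
        · exact hCCsub hX
        · exact hSΔ hX
      have hRΔC : R ∉ ΔC := by
        rw [hΔCdef, Finset.mem_union]
        rintro (h | h)
        · exact hRCC h
        · exact hRS h
      have hΔCcard : ΔC.card ≤ n := by
        have hss : ΔC ⊆ Δ.erase R := by
          intro X hX
          exact Finset.mem_erase.mpr ⟨fun h => hRΔC (h ▸ hX), hΔCsub hX⟩
        have := Finset.card_le_card hss
        rw [Finset.card_erase_of_mem hRΔ] at this
        omega
      have hnbrsin : ∀ F ∈ CC, ∀ H ∈ Δ, H ≠ F → (H ∩ F).Nonempty → H ∈ ΔC := by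
        intro F hF H hH hHF hint
        by_cases hHS : H ∈ S
        · rw [hΔCdef, Finset.mem_union]; exact Or.inr hHS
        · rw [hΔCdef, Finset.mem_union]
          refine Or.inl (hCCclosed F hF H (Finset.mem_sdiff.mpr ⟨hH, hHS⟩)
            (Ne.symm hHF) ?_)
          obtain ⟨z, hz⟩ := hint
          rw [Finset.mem_inter] at hz
          exact ⟨z, Finset.mem_inter.mpr ⟨hz.2, hz.1⟩⟩
      have hgood : ∃ F₀ ∈ CC, GoodNbr ΔC F₀ := by
        by_cases hpair : ∃ A' ∈ ΔC, ∃ B' ∈ ΔC, A' ≠ B' ∧ A' ∩ B' = ∅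
        · obtain ⟨A', hA', B', hB', hA'B', hdisj'⟩ := hpair
          obtain ⟨F₁, hF₁, F₂, hF₂, g₁, g₂, hne12, hdisj12⟩ :=
            ih ΔC hΔCcard (forest_subset hfor hΔCsub)
              (fun F hF => hne F (hΔCsub hF)) A' hA' B' hB' hA'B' hdisj'
          have hnotboth : ¬ (F₁ ∈ S ∧ F₂ ∈ S) := by
            rintro ⟨h1', h2'⟩
            obtain ⟨z, hz⟩ := hSclique F₁ h1' F₂ h2' hne12
            rw [hdisj12] at hz
            simp at hz
          rw [hΔCdef, Finset.mem_union] at hF₁ hF₂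
          rcases hF₁ with hF₁ | hF₁
          · exact ⟨F₁, hF₁, g₁⟩
          · rcases hF₂ with hF₂ | hF₂
            · exact ⟨F₂, hF₂, g₂⟩
            · exact absurd ⟨hF₁, hF₂⟩ hnotboth
        · push_neg at hpair
          refine ⟨W, hWCC, ?_⟩
          intro H hH hHW hHWne H' hH' hH'W hH'Wne hne'
          exact hpair H hH H' hH' hne'
      obtain ⟨F₀, hF₀CC, hF₀good⟩ := hgood
      refine ⟨F₀, hF₀CC, goodnbr_of_subset (hnbrsin F₀ hF₀CC) hF₀good⟩
    obtain ⟨FA, hFACA, hFAgood⟩ := hmain CA A B hCAsub hACA hB hBCA hBS hclosedA hCAS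
    obtain ⟨FB, hFBCB, hFBgood⟩ := hmain CB B A hCBsub hBCB hA hACB hAS hclosedB hCBS
    have hdisjAB : FA ∩ FB = ∅ := hcross FA hFACA FB hFBCB
    have hneAB : FA ≠ FB := by
      intro h
      obtain ⟨x, hx⟩ := hne FA (hCAsub hFACA)
      have : x ∈ FA ∩ FB := Finset.mem_inter.mpr ⟨hx, h ▸ hx⟩
      rw [hdisjAB] at this
      simp at this
    exact ⟨FA, hCAsub hFACA, FB, hCBsub hFBCB, hFAgood, hFBgood, hneAB, hdisjAB⟩

end Dirac
section Koenig

variable {Δ : Finset (Finset α)}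

/-- every nonempty forest has a facet with a vertex common to all neighbors -/
lemma weak_good (hfor : IsForest Δ) (hne : ∀ F ∈ Δ, F.Nonempty) (hΔ : Δ.Nonempty) :
    ∃ F ∈ Δ, ∃ x ∈ F, ∀ H ∈ Δ, H ≠ F → (H ∩ F).Nonempty → x ∈ H := by
  classical
  have hgood : ∃ F ∈ Δ, GoodNbr Δ F := by
    by_cases hpair : ∃ A ∈ Δ, ∃ B ∈ Δ, A ≠ B ∧ A ∩ B = ∅
    · obtain ⟨A, hA, B, hB, hAB, hdisj⟩ := hpair
      obtain ⟨F₁, hF₁, _, _, g₁, _, _, _⟩ :=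
        dirac Δ.card Δ le_rfl hfor hne A hA B hB hAB hdisj
      exact ⟨F₁, hF₁, g₁⟩
    · push_neg at hpair
      obtain ⟨F, hF⟩ := hΔ
      refine ⟨F, hF, ?_⟩
      intro H hH _ _ H' hH' _ _ hne'
      exact hpair H hH H' hH' hne'
  obtain ⟨F, hF, hgoodF⟩ := hgood
  set Snb : Finset (Finset α) := Δ.filter (fun H => H ≠ F ∧ (F ∩ H).Nonempty) with hSnb
  have hFSnb : F ∉ Snb := by
    rw [hSnb, Finset.mem_filter]
    rintro ⟨_, h, _⟩
    exact h rfl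
  have htr : ∀ H ∈ Snb, (F ∩ H).Nonempty := by
    intro H hH
    rw [hSnb, Finset.mem_filter] at hH
    exact hH.2.2
  have hpw : ∀ H ∈ Snb, ∀ H' ∈ Snb, H ≠ H' → (F ∩ H ∩ H').Nonempty := by
    intro H hH H' hH' hne'
    rw [hSnb, Finset.mem_filter] at hH hH'
    have hHFne : (H ∩ F).Nonempty := by
      obtain ⟨z, hz⟩ := hH.2.2
      rw [Finset.mem_inter] at hz
      exact ⟨z, Finset.mem_inter.mpr ⟨hz.2, hz.1⟩⟩
    have hH'Fne : (H' ∩ F).Nonempty := by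
      obtain ⟨z, hz⟩ := hH'.2.2
      rw [Finset.mem_inter] at hz
      exact ⟨z, Finset.mem_inter.mpr ⟨hz.2, hz.1⟩⟩
    have t3 : (H ∩ H').Nonempty :=
      hgoodF H hH.1 hH.2.1 hHFne H' hH'.1 hH'.2.1 hH'Fne hne'
    exact triple_lemma hfor hF hH.1 hH'.1 (Ne.symm hH.2.1) (Ne.symm hH'.2.1)
      hne' hH.2.2 hH'.2.2 t3
  obtain ⟨x, hxF, hxall⟩ := helly hfor hne Snb.card Snb F le_rfl
    (Finset.filter_subset _ _) hF hFSnb htr hpw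
  refine ⟨F, hF, x, hxF, ?_⟩
  intro H hH hHF hint
  refine hxall H ?_
  rw [hSnb, Finset.mem_filter]
  obtain ⟨z, hz⟩ := hint
  rw [Finset.mem_inter] at hz
  exact ⟨hH, hHF, ⟨z, Finset.mem_inter.mpr ⟨hz.2, hz.1⟩⟩⟩

/-- König's theorem for simplicial forests. -/
lemma koenig : ∀ (n : ℕ) (Δ : Finset (Finset α)), Δ.card ≤ n → IsForest Δ →
    (∀ F ∈ Δ, F.Nonempty) →
    ∃ S : Finset (Finset α), IndependentFacets Δ S ∧ S.card = coverNum Δ := by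
  classical
  intro n
  induction n with
  | zero =>
    intro Δ hcard _ _
    rw [Nat.le_zero, Finset.card_eq_zero] at hcard
    subst hcard
    refine ⟨∅, ⟨Finset.Subset.refl _, by simp⟩, ?_⟩
    have hcov : IsVertexCover (∅ : Finset (Finset α)) (∅ : Finset α) := by
      intro F hF
      simp at hF
    have := coverNum_le hcov
    simp only [Finset.card_empty] at this ⊢
    omega
  | succ n ih =>
    intro Δ hcard hfor hne
    rcases Finset.eq_empty_or_nonempty Δ with rfl | hΔne
    · refine ⟨∅, ⟨Finset.Subset.refl _, by simp⟩, ?_⟩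
      have hcov : IsVertexCover (∅ : Finset (Finset α)) (∅ : Finset α) := by
        intro F hF
        simp at hF
      have := coverNum_le hcov
      simp only [Finset.card_empty] at this ⊢
      omega
    obtain ⟨F, hF, x, hxF, hxnbr⟩ := weak_good hfor hne hΔne
    set Δ' : Finset (Finset α) := Δ.filter (fun H => F ∩ H = ∅) with hΔ'def
    have hΔ'sub : Δ' ⊆ Δ := Finset.filter_subset _ _
    have hFΔ' : F ∉ Δ' := by
      rw [hΔ'def, Finset.mem_filter]
      rintro ⟨_, h⟩
      rw [Finset.inter_self] at h
      obtain ⟨z, hz⟩ := hne F hF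
      rw [h] at hz
      simp at hz
    have hΔ'card : Δ'.card ≤ n := by
      have hss : Δ' ⊆ Δ.erase F :=
        fun X hX => Finset.mem_erase.mpr ⟨fun h => hFΔ' (h ▸ hX), hΔ'sub hX⟩
      have := Finset.card_le_card hss
      rw [Finset.card_erase_of_mem hF] at this
      omega
    obtain ⟨S', hS'ind, hS'card⟩ := ih Δ' hΔ'card (forest_subset hfor hΔ'sub)
      (fun G hG => hne G (hΔ'sub hG))
    obtain ⟨A', hA'cov, hA'card⟩ := exists_min_cover
      (fun G hG => hne G (hΔ'sub hG))
    have hAcov : IsVertexCover Δ (insert x A') := by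
      intro H hH
      by_cases hHF : H = F
      · exact ⟨x, Finset.mem_inter.mpr ⟨Finset.mem_insert_self _ _, hHF ▸ hxF⟩⟩
      · by_cases hdis : F ∩ H = ∅
        · obtain ⟨z, hz⟩ := hA'cov H (by rw [hΔ'def, Finset.mem_filter]; exact ⟨hH, hdis⟩)
          rw [Finset.mem_inter] at hz
          exact ⟨z, Finset.mem_inter.mpr ⟨Finset.mem_insert_of_mem hz.1, hz.2⟩⟩
        · have hint : (H ∩ F).Nonempty := by
            obtain ⟨z, hz⟩ := Finset.nonempty_iff_ne_empty.mpr hdis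
            rw [Finset.mem_inter] at hz
            exact ⟨z, Finset.mem_inter.mpr ⟨hz.2, hz.1⟩⟩
          exact ⟨x, Finset.mem_inter.mpr ⟨Finset.mem_insert_self _ _,
            hxnbr H hH hHF hint⟩⟩
    have hub : coverNum Δ ≤ coverNum Δ' + 1 := by
      have := coverNum_le hAcov
      have hcard' : (insert x A').card ≤ A'.card + 1 := Finset.card_insert_le _ _
      omega
    have hFS' : F ∉ S' := fun h => hFΔ' (hS'ind.1 h)
    set S : Finset (Finset α) := insert F S' with hSdef
    have hSind : IndependentFacets Δ S := by
      constructor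
      · intro G hG
        rw [hSdef, Finset.mem_insert] at hG
        rcases hG with rfl | hG
        · exact hF
        · exact hΔ'sub (hS'ind.1 hG)
      · intro G hG G' hG' hne'
        rw [hSdef, Finset.mem_insert] at hG hG'
        rcases hG with rfl | hG
        · rcases hG' with rfl | hG'
          · exact absurd rfl hne'
          · have := (Finset.mem_filter.mp (hS'ind.1 hG')).2
            exact this
        · rcases hG' with rfl | hG'
          · have := (Finset.mem_filter.mp (hS'ind.1 hG)).2
            rw [Finset.inter_comm] at this
            exact this
          · exact hS'ind.2 G hG G' hG' hne'
    have hScard : S.card = coverNum Δ' + 1 := by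
      rw [hSdef, Finset.card_insert_of_notMem hFS', hS'card]
    have hlb : S.card ≤ coverNum Δ := by
      obtain ⟨A₀, hA₀cov, hA₀card⟩ := exists_min_cover hne
      have := card_le_of_meets S A₀ hSind.2 (fun G hG => hA₀cov G (hSind.1 hG))
      omega
    exact ⟨S, hSind, by omega⟩

end Koenig
/-- In an unmixed tree, any maximal independent set of facets of cardinality
α(Δ) contains all the leaves; in particular, the leaves are pairwise
disjoint. -/
theorem leaves_in_maximal_independent (Δ : Finset (Finset α))
    (hmax : FacetAntichain Δ) (hne : ∀ F ∈ Δ, F.Nonempty)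
    (htree : IsTree Δ) (hunmixed : Unmixed Δ) :
    (∀ S : Finset (Finset α), MaximalIndependent Δ S → S.card = coverNum Δ →
      ∀ F : Finset α, IsLeaf Δ F → F ∈ S) ∧
    (∀ F G : Finset α, IsLeaf Δ F → IsLeaf Δ G → F ≠ G → F ∩ G = ∅) := by
  constructor
  · intro S hSmax hScard F hF
    exact leaf_mem_of_indep hmax hne hunmixed hSmax.1 hScard hF
  · intro F G hF hG hFG
    obtain ⟨S₀, hS₀ind, hS₀card⟩ := koenig Δ.card Δ le_rfl htree.2 hne
    have hFmem := leaf_mem_of_indep hmax hne hunmixed hS₀ind hS₀card hF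
    have hGmem := leaf_mem_of_indep hmax hne hunmixed hS₀ind hS₀card hG
    exact hS₀ind.2 F hFmem G hGmem hFG
end

section
/- In an unmixed tree, no joint belongs to any maximal independent set of facets of cardinality α(Δ); in particular, a joint of an unmixed tree is never a leaf. -/
open Finset

variable {α : Type*} [DecidableEq α]

/-!
A joint `G` of the leaf `F` meets `F`, and `F` has a free vertex `v` (`F ⊄ G` as the facets form an
antichain). Covering `F` by `v` alone, `G` by vertices off `F`, and every other facet by its vertices
outside `F ∪ G` gives a vertex cover; a minimal cover inside it must contain `v`, and by unmixedness it
has `α(Δ)` elements. If `G` lay in an independent set `S` of `α(Δ)` facets, every vertex of that cover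
would lie in a member of `S`, so `v` would lie in `F ∈ S`, which is impossible next to `G ∈ S`. If `G`
were a leaf as well, with free vertex `u`, then trading `v` and `u` in the minimal cover for a single
vertex of `F ∩ G` would give a cover with fewer than `α(Δ)` vertices.
-/

variable {Δ : Finset (Finset α)}

namespace IsVertexCover

variable {A : Finset α}

theorem exists_isMinimalVertexCover_subset (hA : IsVertexCover Δ A) :
    ∃ B ⊆ A, IsMinimalVertexCover Δ B := by
  induction A using Finset.strongInduction with
  | _ A ih =>
    by_cases hmin : ∀ B ⊆ A, IsVertexCover Δ B → B = A
    · exact ⟨A, Subset.rfl, hA, hmin⟩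
    · push Not at hmin
      obtain ⟨B, hBA, hB, hBne⟩ := hmin
      obtain ⟨C, hCB, hC⟩ := ih B (hBA.ssubset_of_ne hBne) hB
      exact ⟨C, hCB.trans hBA, hC⟩

theorem coverNum_le_card (hA : IsVertexCover Δ A) : coverNum Δ ≤ A.card :=
  Nat.sInf_le ⟨A, hA, rfl⟩

theorem exists_card_eq_coverNum (hA : IsVertexCover Δ A) :
    ∃ B, IsVertexCover Δ B ∧ B.card = coverNum Δ :=
  Nat.sInf_mem (s := {n | ∃ B, IsVertexCover Δ B ∧ B.card = n}) ⟨A.card, A, hA, rfl⟩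

theorem mem_of_subset_insert (hA : IsVertexCover Δ A) {F R : Finset α} (hF : F ∈ Δ) {v : α}
    (hAR : A ⊆ insert v R) (hRF : Disjoint R F) : v ∈ A := by
  obtain ⟨a, ha⟩ := hA F hF
  obtain ⟨haA, haF⟩ := mem_inter.1 ha
  rcases mem_insert.1 (hAR haA) with rfl | haR
  · exact haA
  · exact absurd haF (disjoint_left.1 hRF haR)

end IsVertexCover

theorem isVertexCover_sdiff_union {A X Y : Finset α}
    (hY : ∀ F ∈ Δ, A ∩ F ⊆ X → (Y ∩ F).Nonempty) : IsVertexCover Δ (A \ X ∪ Y) := by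
  intro F hF
  by_cases hAF : A ∩ F ⊆ X
  · exact (hY F hF hAF).mono (inter_subset_inter_right subset_union_right)
  · obtain ⟨a, ha, haX⟩ := not_subset.1 hAF
    exact ⟨a, mem_inter.2 ⟨mem_union_left _ (mem_sdiff.2 ⟨(mem_inter.1 ha).1, haX⟩),
      (mem_inter.1 ha).2⟩⟩

theorem IsMinimalVertexCover.card_eq_coverNum {A : Finset α} (hu : Unmixed Δ)
    (hA : IsMinimalVertexCover Δ A) : A.card = coverNum Δ := by
  obtain ⟨B, hB, hBcard⟩ := hA.1.exists_card_eq_coverNum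
  have hBmin : IsMinimalVertexCover Δ B :=
    ⟨hB, fun C hCB hC => eq_of_subset_of_card_le hCB (hBcard ▸ hC.coverNum_le_card)⟩
  rw [hu A B hA hBmin, hBcard]

theorem IndependentFacets.exists_mem_of_card_le {S : Finset (Finset α)} {B : Finset α}
    (hS : IndependentFacets Δ S) (hB : IsVertexCover Δ B) (hcard : B.card ≤ S.card) :
    ∀ b ∈ B, ∃ H ∈ S, b ∈ H := by
  choose f hf using fun H (hH : H ∈ S) => hB H (hS.1 hH)
  -- choosing a vertex of `B` in each member of `S` is injective because the members are disjoint
  have hinj : ∀ H₁ H₂ (h₁ : H₁ ∈ S) (h₂ : H₂ ∈ S), f H₁ h₁ = f H₂ h₂ → H₁ = H₂ := by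
    intro H₁ H₂ h₁ h₂ hf₁₂
    by_contra hne
    have hmem : f H₁ h₁ ∈ H₁ ∩ H₂ :=
      mem_inter.2 ⟨(mem_inter.1 (hf H₁ h₁)).2, hf₁₂ ▸ (mem_inter.1 (hf H₂ h₂)).2⟩
    simp [hS.2 H₁ h₁ H₂ h₂ hne] at hmem
  intro b hb
  obtain ⟨H, hH, rfl⟩ :=
    surj_on_of_inj_on_of_card_le f (fun H hH => (mem_inter.1 (hf H hH)).1) hinj hcard b hb
  exact ⟨H, hH, (mem_inter.1 (hf H hH)).2⟩

omit [DecidableEq α] in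
theorem FreeVertex.notMem_of_ne {v : α} {F G : Finset α} (hv : FreeVertex Δ v F) (hG : G ∈ Δ)
    (hGF : G ≠ F) : v ∉ G :=
  fun hvG => hGF (hv.2.2 G hG hvG)

theorem IsLeaf.exists_freeVertex {F H : Finset α} (hmax : FacetAntichain Δ) (hF : IsLeaf Δ F)
    (hH : H ∈ Δ) (hHF : H ≠ F) : ∃ v, FreeVertex Δ v F := by
  obtain ⟨hFΔ, hsingle | ⟨G, hG, hGF, hleaf⟩⟩ := hF
  · exact absurd (mem_singleton.1 (hsingle ▸ hH)) hHF
  obtain ⟨v, hvF, hvG⟩ := not_subset.1 fun hFG => hGF (hmax F hFΔ G hG hFG).symm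
  refine ⟨v, hFΔ, hvF, fun F' hF' hvF' => ?_⟩
  by_contra hF'F
  exact hvG (mem_inter.1 (hleaf F' hF' hF'F (mem_inter.2 ⟨hvF, hvF'⟩))).2

theorem IsVertexCover.coverNum_lt_card_of_freeVertex {B F G : Finset α} {v u f : α}
    (hB : IsVertexCover Δ B) (hv : FreeVertex Δ v F) (hu : FreeVertex Δ u G) (hvB : v ∈ B)
    (huB : u ∈ B) (hvu : v ≠ u) (hf : f ∈ F ∩ G) : coverNum Δ < B.card := by
  -- `v` and `u` only cover `F` and `G`, and `f` covers both
  have hB' : IsVertexCover Δ (B \ {v, u} ∪ {f}) := isVertexCover_sdiff_union fun H hH hBH => by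
    obtain ⟨x, hx⟩ := hB H hH
    refine ⟨f, mem_inter.2 ⟨mem_singleton_self f, ?_⟩⟩
    have hxH := (mem_inter.1 hx).2
    rcases mem_insert.1 (hBH hx) with rfl | hxu
    · exact hv.2.2 H hH hxH ▸ (mem_inter.1 hf).1
    · rw [mem_singleton.1 hxu] at hxH
      exact hu.2.2 H hH hxH ▸ (mem_inter.1 hf).2
  have hvuB : {v, u} ⊆ B := insert_subset hvB (singleton_subset_iff.2 huB)
  have htwo := card_le_card hvuB
  rw [card_pair hvu] at htwo
  calc coverNum Δ ≤ (B \ {v, u} ∪ {f}).card := hB'.coverNum_le_card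
    _ ≤ (B \ {v, u}).card + 1 := card_union_le _ _
    _ = B.card - 2 + 1 := by rw [card_sdiff_of_subset hvuB, card_pair hvu]
    _ < B.card := by omega

namespace IsJoint

variable {G F : Finset α}

theorem isLeaf (hj : IsJoint Δ G F) : IsLeaf Δ F :=
  ⟨hj.1, Or.inr ⟨G, hj.2.1, hj.2.2.1, hj.2.2.2.1⟩⟩

theorem exists_freeVertex (hmax : FacetAntichain Δ) (hj : IsJoint Δ G F) :
    ∃ v, FreeVertex Δ v F :=
  hj.isLeaf.exists_freeVertex hmax hj.2.1 hj.2.2.1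

theorem not_subset_union (hmax : FacetAntichain Δ) (hj : IsJoint Δ G F) {H : Finset α}
    (hH : H ∈ Δ) (hHF : H ≠ F) (hHG : H ≠ G) : ¬ H ⊆ F ∪ G := by
  intro hHFG
  refine hHG (hmax H hH G hj.2.1 fun x hx => ?_)
  rcases mem_union.1 (hHFG hx) with hxF | hxG
  · exact (mem_inter.1 (hj.2.2.2.1 H hH hHF (mem_inter.2 ⟨hxF, hx⟩))).2
  · exact hxG

theorem isVertexCover (hmax : FacetAntichain Δ) (hj : IsJoint Δ G F) {A : Finset α}
    (hAF : (A ∩ F).Nonempty) (hAG : (A ∩ G).Nonempty)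
    (hrest : Δ.biUnion id \ (F ∪ G) ⊆ A) : IsVertexCover Δ A := by
  intro H hH
  by_cases hHF : H = F
  · exact hHF ▸ hAF
  by_cases hHG : H = G
  · exact hHG ▸ hAG
  obtain ⟨x, hxH, hx⟩ := not_subset.1 (hj.not_subset_union hmax hH hHF hHG)
  exact ⟨x, mem_inter.2 ⟨hrest (mem_sdiff.2 ⟨mem_biUnion.2 ⟨H, hH, hxH⟩, hx⟩), hxH⟩⟩

theorem notMem_of_card_eq_coverNum (hmax : FacetAntichain Δ) (hun : Unmixed Δ)
    (hj : IsJoint Δ G F) {S : Finset (Finset α)} (hS : IndependentFacets Δ S)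
    (hcard : S.card = coverNum Δ) : G ∉ S := by
  intro hGS
  obtain ⟨v, hv⟩ := hj.exists_freeVertex hmax
  obtain ⟨g, hgG, hgF⟩ := not_subset.1 fun hGF => hj.2.2.1 (hmax G hj.2.1 F hj.1 hGF)
  set R := (G \ F) ∪ Δ.biUnion id \ (F ∪ G)
  have hA : IsVertexCover Δ (insert v R) := hj.isVertexCover hmax
    ⟨v, by simp [hv.2.1]⟩ ⟨g, by simp [R, hgG, hgF]⟩ (subset_union_right.trans (subset_insert _ _))
  obtain ⟨B, hBA, hB⟩ := hA.exists_isMinimalVertexCover_subset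
  have hvB : v ∈ B := hB.1.mem_of_subset_insert hj.1 hBA <|
    disjoint_union_left.2 ⟨sdiff_disjoint, sdiff_disjoint.mono_right subset_union_left⟩
  obtain ⟨H, hHS, hvH⟩ :=
    hS.exists_mem_of_card_le hB.1 (by rw [hB.card_eq_coverNum hun, hcard]) v hvB
  have hFS : F ∈ S := hv.2.2 H (hS.1 hHS) hvH ▸ hHS
  exact hj.2.2.2.2.ne_empty (hS.2 F hFS G hGS hj.2.2.1.symm)

theorem not_isLeaf (hmax : FacetAntichain Δ) (hun : Unmixed Δ) (hj : IsJoint Δ G F) :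
    ¬ IsLeaf Δ G := by
  intro hG
  obtain ⟨v, hv⟩ := hj.exists_freeVertex hmax
  obtain ⟨u, hu⟩ := hG.exists_freeVertex hmax hj.1 hj.2.2.1.symm
  have hvG : v ∉ G := hv.notMem_of_ne hj.2.1 hj.2.2.1
  have huF : u ∉ F := hu.notMem_of_ne hj.1 hj.2.2.1.symm
  set R := Δ.biUnion id \ (F ∪ G)
  have hA : IsVertexCover Δ (insert v (insert u R)) := hj.isVertexCover hmax
    ⟨v, by simp [hv.2.1]⟩ ⟨u, by simp [hu.2.1]⟩ ((subset_insert _ _).trans (subset_insert _ _))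
  obtain ⟨B, hBA, hB⟩ := hA.exists_isMinimalVertexCover_subset
  have hvB : v ∈ B := hB.1.mem_of_subset_insert hj.1 hBA <|
    disjoint_insert_left.2 ⟨huF, sdiff_disjoint.mono_right subset_union_left⟩
  have huB : u ∈ B := hB.1.mem_of_subset_insert hj.2.1 (insert_comm v u R ▸ hBA) <|
    disjoint_insert_left.2 ⟨hvG, sdiff_disjoint.mono_right subset_union_right⟩
  have hvu : v ≠ u := fun h => hvG (h ▸ hu.2.1)
  obtain ⟨f, hf⟩ := hj.2.2.2.2
  exact (hB.1.coverNum_lt_card_of_freeVertex hv hu hvB huB hvu hf).ne' (hB.card_eq_coverNum hun)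

end IsJoint

theorem joint_not_in_maximal_independent_general (Δ : Finset (Finset α))
    (hmax : FacetAntichain Δ)
    (hunmixed : Unmixed Δ)
    (G F : Finset α) (hjoint : IsJoint Δ G F) :
    (∀ S : Finset (Finset α), MaximalIndependent Δ S → S.card = coverNum Δ →
      G ∉ S) ∧ ¬ IsLeaf Δ G :=
  ⟨fun _ hS hcard => hjoint.notMem_of_card_eq_coverNum hmax hunmixed hS.1 hcard,
    hjoint.not_isLeaf hmax hunmixed⟩

/-- In an unmixed tree, no joint belongs to a maximal independent set of
facets of cardinality α(Δ); in particular, a joint is never a leaf. -/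
theorem joint_not_in_maximal_independent (Δ : Finset (Finset α))
    (hmax : FacetAntichain Δ) (hne : ∀ F ∈ Δ, F.Nonempty)
    (htree : IsTree Δ) (hunmixed : Unmixed Δ)
    (G F : Finset α) (hjoint : IsJoint Δ G F) :
    (∀ S : Finset (Finset α), MaximalIndependent Δ S → S.card = coverNum Δ →
      G ∉ S) ∧ ¬ IsLeaf Δ G :=
  joint_not_in_maximal_independent_general Δ hmax hunmixed G F hjoint
end

section
/- An unmixed tree with more than one facet cannot have exactly two facets; i.e., if Δ is a connected unmixed tree with at least two facets, then Δ has at least three facets. -/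
open Finset

variable {α : Type*} [DecidableEq α]

/-!
If `Δ = {F, G}` is connected, some vertex `x` lies in `F ∩ G`, so `{x}` is a minimal vertex
cover; since neither facet contains the other, picking `a ∈ F \ G` and `b ∈ G \ F` gives a
second minimal vertex cover `{a, b}`, of a different size.
-/

namespace ComplexConnected

variable {Δ : Finset (Finset α)}

theorem exists_ne_inter_nonempty (hΔ : ComplexConnected Δ) {F G : Finset α} (hF : F ∈ Δ)
    (hG : G ∈ Δ) (hFG : F ≠ G) : ∃ H ∈ Δ, H ≠ F ∧ (F ∩ H).Nonempty := by
  suffices ∀ B, Relation.ReflTransGen (fun A B => A ∈ Δ ∧ B ∈ Δ ∧ (A ∩ B).Nonempty) F B →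
      B = F ∨ ∃ H ∈ Δ, H ≠ F ∧ (F ∩ H).Nonempty from
    (this G (hΔ F hF G hG)).resolve_left hFG.symm
  intro B hpath
  induction hpath with
  | refl => exact Or.inl rfl
  | @tail A B _ hstep ih =>
    obtain ⟨-, hB, hAB⟩ := hstep
    rcases ih with rfl | hH
    · by_cases hBA : B = A
      · exact Or.inl hBA
      · exact Or.inr ⟨B, hB, hBA, hAB⟩
    · exact Or.inr hH

end ComplexConnected

theorem IsVertexCover.isMinimalVertexCover {Δ : Finset (Finset α)} {A : Finset α}
    (hA : IsVertexCover Δ A) (hpriv : ∀ v ∈ A, ∃ F ∈ Δ, A ∩ F = {v}) :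
    IsMinimalVertexCover Δ A := by
  refine ⟨hA, fun B hBA hB => hBA.antisymm fun v hv => ?_⟩
  obtain ⟨F, hF, hAF⟩ := hpriv v hv
  obtain ⟨w, hw⟩ := hB F hF
  have hwAF : w ∈ A ∩ F := inter_subset_inter_right hBA hw
  rw [hAF, mem_singleton] at hwAF
  exact hwAF ▸ (mem_inter.mp hw).1

theorem isMinimalVertexCover_singleton {Δ : Finset (Finset α)} (hΔ : Δ.Nonempty) {x : α}
    (hx : ∀ F ∈ Δ, x ∈ F) : IsMinimalVertexCover Δ {x} := by
  refine IsVertexCover.isMinimalVertexCover (fun F hF => ⟨x, by simp [hx F hF]⟩) ?_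
  intro v hv
  obtain ⟨F, hF⟩ := hΔ
  exact ⟨F, hF, by simp [hx F hF, mem_singleton.mp hv]⟩

theorem isMinimalVertexCover_pair {F G : Finset α} {a b : α} (haF : a ∈ F) (haG : a ∉ G)
    (hbG : b ∈ G) (hbF : b ∉ F) : IsMinimalVertexCover {F, G} {a, b} := by
  refine IsVertexCover.isMinimalVertexCover ?_ ?_
  · simp only [IsVertexCover, mem_insert, mem_singleton, forall_eq_or_imp, forall_eq]
    exact ⟨⟨a, by simp [haF]⟩, ⟨b, by simp [hbG]⟩⟩
  · simp only [mem_insert, mem_singleton, forall_eq_or_imp, forall_eq, exists_eq_or_imp,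
      exists_eq_left]
    exact ⟨Or.inl (by ext; aesop), Or.inr (by ext; aesop)⟩

theorem unmixed_tree_not_two_facets_general (Δ : Finset (Finset α))
    (hmax : FacetAntichain Δ)
    (htree : IsTree Δ) (hunmixed : Unmixed Δ) (hcard : 2 ≤ Δ.card) :
    3 ≤ Δ.card := by
  by_contra! hlt
  obtain ⟨F, G, hFG, rfl⟩ := card_eq_two.mp (by omega : Δ.card = 2)
  have hF : F ∈ ({F, G} : Finset (Finset α)) := by simp
  have hG : G ∈ ({F, G} : Finset (Finset α)) := by simp
  obtain ⟨x, hx⟩ : (F ∩ G).Nonempty := by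
    obtain ⟨H, hH, hHF, hFH⟩ := htree.1.exists_ne_inter_nonempty hF hG hFG
    rwa [(mem_insert.mp hH).resolve_left hHF |> mem_singleton.mp] at hFH
  obtain ⟨a, haF, haG⟩ := not_subset.mp fun hsub => hFG (hmax F hF G hG hsub)
  obtain ⟨b, hbG, hbF⟩ := not_subset.mp fun hsub => hFG (hmax G hG F hF hsub).symm
  have hx_cover : IsMinimalVertexCover {F, G} {x} :=
    isMinimalVertexCover_singleton ⟨F, hF⟩ (by simpa using mem_inter.mp hx)
  have hcard_eq := hunmixed _ _ hx_cover (isMinimalVertexCover_pair haF haG hbG hbF)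
  rw [card_singleton, card_pair (by rintro rfl; exact hbF haF)] at hcard_eq
  omega

/-- A connected unmixed tree with at least two facets has at least three
facets. -/
theorem unmixed_tree_not_two_facets (Δ : Finset (Finset α))
    (hmax : FacetAntichain Δ) (hne : ∀ F ∈ Δ, F.Nonempty)
    (htree : IsTree Δ) (hunmixed : Unmixed Δ) (hcard : 2 ≤ Δ.card) :
    3 ≤ Δ.card :=
  unmixed_tree_not_two_facets_general Δ hmax htree hunmixed hcard
end

section
/- In a grafted simplicial complex, the facets meeting a fixed leaf F have nested intersections with F: if H₁, …, H_t are all facets other than F intersecting F nontrivially, then the sets H_i ∩ F form a chain under inclusion. -/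
open Finset

variable {α : Type*} [DecidableEq α]

/-- `Δ` is a grafting of `Gs` with the pairwise-disjoint simplices `Fs`:
(i) every vertex of each `G ∈ Gs` lies in some `F ∈ Fs`; (ii) `Fs` is
exactly the set of leaves of `Δ`; (iii) `Fs` and `Gs` are disjoint;
(iv) the members of `Fs` are pairwise disjoint; (v) removing any joint
`G ∈ Gs` yields a grafted complex. -/
def IsGrafted (Δ Fs Gs : Finset (Finset α)) : Prop :=
  Δ = Fs ∪ Gs ∧
  (∀ G ∈ Gs, ∀ v ∈ G, ∃ F ∈ Fs, v ∈ F) ∧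
  (∀ F, F ∈ Fs ↔ IsLeaf Δ F) ∧
  Disjoint Fs Gs ∧
  (∀ F ∈ Fs, ∀ F' ∈ Fs, F ≠ F' → F ∩ F' = ∅) ∧
  (∀ G, G ∈ Δ → G ∈ Gs → (∃ F, IsJoint Δ G F) →
    ∃ Fs' Gs', IsGrafted (Δ.erase G) Fs' Gs')
termination_by Δ.card
decreasing_by exact Finset.card_erase_lt_of_mem (by assumption)

/-! Induction on the number of facets. If the joint `G` of the leaf `F` misses `F`, all traces
on `F` are empty. Otherwise `G` is a graft, and removing it leaves a smaller grafted complex in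
which `F` is still a leaf: else a vertex of `F` lies in a leaf `L ≠ F` of `Δ.erase G`, whose traces
are nested by induction. The largest of them also dominates the trace of `G` on `L`, since every
vertex of `G` lies in a leaf of `Δ` other than `L`; so `L` would be a leaf of `Δ` meeting the leaf
`F`. Hence the traces on `F` in `Δ.erase G` are nested, and the trace of `G` contains the others. -/

def NestedTraces (Δ : Finset (Finset α)) (F : Finset α) : Prop :=
  ∀ A ∈ Δ, ∀ B ∈ Δ, F ∩ A ⊆ F ∩ B ∨ F ∩ B ⊆ F ∩ A

section

variable {Δ Γ Fs Gs Fs' Gs' : Finset (Finset α)} {F G L : Finset α}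

lemma nestedTraces_of_ne
    (h : ∀ A ∈ Δ, ∀ B ∈ Δ, A ≠ F → B ≠ F → F ∩ A ⊆ F ∩ B ∨ F ∩ B ⊆ F ∩ A) :
    NestedTraces Δ F := by
  intro A hA B hB
  rcases eq_or_ne A F with rfl | hAF
  · exact Or.inr (by simp)
  rcases eq_or_ne B F with rfl | hBF
  · exact Or.inl (by simp)
  exact h A hA B hB hAF hBF

lemma NestedTraces.mono (h : NestedTraces Δ F) (hΓ : Γ ⊆ Δ) : NestedTraces Γ F :=
  fun A hA B hB => h A (hΓ hA) B (hΓ hB)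

lemma NestedTraces.exists_greatest (h : NestedTraces Δ F) (hΔ : Δ.Nonempty) :
    ∃ D ∈ Δ, ∀ A ∈ Δ, F ∩ A ⊆ F ∩ D := by
  obtain ⟨D, hD, hmax⟩ := Δ.exists_max_image (fun A => (F ∩ A).card) hΔ
  refine ⟨D, hD, fun A hA => (h A hA D hD).elim id fun hDA => ?_⟩
  exact (eq_of_subset_of_card_le hDA (hmax A hA)).ge

lemma NestedTraces.of_erase (h : NestedTraces (Δ.erase G) F)
    (hG : ∀ A ∈ Δ, A ≠ F → F ∩ A ⊆ F ∩ G) : NestedTraces Δ F :=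
  nestedTraces_of_ne fun A hA B hB hAF hBF => by
    rcases eq_or_ne A G with rfl | hAG
    · exact Or.inr (hG B hB hBF)
    rcases eq_or_ne B G with rfl | hBG
    · exact Or.inl (hG A hA hAF)
    exact h A (mem_erase.2 ⟨hAG, hA⟩) B (mem_erase.2 ⟨hBG, hB⟩)

namespace IsGrafted

lemma eq_union (hg : IsGrafted Δ Fs Gs) : Δ = Fs ∪ Gs := by
  rw [IsGrafted] at hg
  exact hg.1

lemma exists_mem_of_mem_grafts (hg : IsGrafted Δ Fs Gs) (hG : G ∈ Gs) {v : α} (hv : v ∈ G) :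
    ∃ F ∈ Fs, v ∈ F := by
  rw [IsGrafted] at hg
  exact hg.2.1 G hG v hv

lemma mem_iff_isLeaf (hg : IsGrafted Δ Fs Gs) : F ∈ Fs ↔ IsLeaf Δ F := by
  rw [IsGrafted] at hg
  exact hg.2.2.1 F

lemma disjoint (hg : IsGrafted Δ Fs Gs) : Disjoint Fs Gs := by
  rw [IsGrafted] at hg
  exact hg.2.2.2.1

lemma inter_eq_empty (hg : IsGrafted Δ Fs Gs) (hF : F ∈ Fs) (hL : L ∈ Fs) (hFL : F ≠ L) :
    F ∩ L = ∅ := by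
  rw [IsGrafted] at hg
  exact hg.2.2.2.2.1 F hF L hL hFL

lemma exists_isGrafted_erase (hg : IsGrafted Δ Fs Gs) (hG : G ∈ Δ) (hGs : G ∈ Gs)
    (hjoint : IsJoint Δ G F) : ∃ Fs' Gs', IsGrafted (Δ.erase G) Fs' Gs' := by
  rw [IsGrafted] at hg
  exact hg.2.2.2.2.2 G hG hGs ⟨F, hjoint⟩

lemma ne_of_mem_of_mem_grafts (hg : IsGrafted Δ Fs Gs) (hF : F ∈ Fs) (hG : G ∈ Gs) : F ≠ G :=
  fun h => disjoint_left.1 hg.disjoint hF (h ▸ hG)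

lemma mem_grafts_of_inter_nonempty (hg : IsGrafted Δ Fs Gs) (hF : F ∈ Fs) (hG : G ∈ Δ)
    (hGF : G ≠ F) (hFG : (F ∩ G).Nonempty) : G ∈ Gs :=
  (mem_union.1 (hg.eq_union ▸ hG)).resolve_left fun hGFs =>
    hFG.ne_empty (hg.inter_eq_empty hF hGFs hGF.symm)

lemma mem_of_nestedTraces_erase (hg : IsGrafted Δ Fs Gs) (hG : G ∈ Gs) (hL : L ∈ Δ)
    (hne : ((Δ.erase G).erase L).Nonempty) (hnest : NestedTraces (Δ.erase G) L) : L ∈ Fs := by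
  by_contra hLFs
  obtain ⟨D, hD, hDmax⟩ := (hnest.mono (erase_subset _ _)).exists_greatest hne
  have hdom : ∀ A ∈ Δ, A ≠ L → A ≠ G → L ∩ A ⊆ L ∩ D := fun A hA hAL hAG =>
    hDmax A (mem_erase.2 ⟨hAL, mem_erase.2 ⟨hAG, hA⟩⟩)
  -- every vertex of the graft `G` lies in a leaf `K`, and `K ≠ L` since `L` is not a leaf
  have hGdom : L ∩ G ⊆ L ∩ D := by
    intro v hv
    obtain ⟨hvL, hvG⟩ := mem_inter.1 hv
    obtain ⟨K, hK, hvK⟩ := hg.exists_mem_of_mem_grafts hG hvG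
    exact hdom K (hg.eq_union ▸ mem_union_left _ hK) (ne_of_mem_of_not_mem hK hLFs)
      (hg.ne_of_mem_of_mem_grafts hK hG) (mem_inter.2 ⟨hvL, hvK⟩)
  refine hLFs (hg.mem_iff_isLeaf.2 ⟨hL, Or.inr ⟨D, mem_of_mem_erase (mem_of_mem_erase hD),
    ne_of_mem_erase hD, fun A hA hAL => ?_⟩⟩)
  rcases eq_or_ne A G with rfl | hAG
  · exact hGdom
  · exact hdom A hA hAL hAG

lemma isLeaf_erase (hg : IsGrafted Δ Fs Gs) (hg' : IsGrafted (Δ.erase G) Fs' Gs')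
    (hnest : ∀ L, IsLeaf (Δ.erase G) L → NestedTraces (Δ.erase G) L)
    (hF : F ∈ Fs) (hG : G ∈ Gs) (hFG : (F ∩ G).Nonempty) : IsLeaf (Δ.erase G) F := by
  have hFΔ' : F ∈ Δ.erase G :=
    mem_erase.2 ⟨hg.ne_of_mem_of_mem_grafts hF hG, hg.eq_union ▸ mem_union_left _ hF⟩
  by_contra hnot
  have hFGs' : F ∈ Gs' :=
    (mem_union.1 (hg'.eq_union ▸ hFΔ')).resolve_left (mt hg'.mem_iff_isLeaf.1 hnot)
  obtain ⟨v, hv⟩ := hFG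
  obtain ⟨L, hL, hvL⟩ := hg'.exists_mem_of_mem_grafts hFGs' (mem_inter.1 hv).1
  have hLF : L ≠ F := hg'.ne_of_mem_of_mem_grafts hL hFGs'
  have hLleaf := hg'.mem_iff_isLeaf.1 hL
  have hLFs : L ∈ Fs := hg.mem_of_nestedTraces_erase hG (mem_of_mem_erase hLleaf.1)
    ⟨F, mem_erase.2 ⟨hLF.symm, hFΔ'⟩⟩ (hnest L hLleaf)
  have hvLF : v ∈ L ∩ F := mem_inter.2 ⟨hvL, (mem_inter.1 hv).1⟩
  simp [hg.inter_eq_empty hLFs hF hLF] at hvLF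

theorem nestedTraces (hg : IsGrafted Δ Fs Gs) (hF : IsLeaf Δ F) : NestedTraces Δ F := by
  induction Δ using Finset.strongInduction generalizing Fs Gs F with
  | H Δ ih =>
  have hFFs := hg.mem_iff_isLeaf.2 hF
  obtain ⟨hFΔ, rfl | ⟨G, hGΔ, hGF, hdom⟩⟩ := hF
  · exact nestedTraces_of_ne fun A hA _ _ hAF _ => absurd (mem_singleton.1 hA) hAF
  rcases (F ∩ G).eq_empty_or_nonempty with hFG | hFG
  · exact nestedTraces_of_ne fun A hA _ _ hAF _ =>
      Or.inl ((hdom A hA hAF).trans (hFG ▸ empty_subset _))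
  have hGGs := hg.mem_grafts_of_inter_nonempty hFFs hGΔ hGF hFG
  obtain ⟨Fs', Gs', hg'⟩ := hg.exists_isGrafted_erase hGΔ hGGs ⟨hFΔ, hGΔ, hGF, hdom, hFG⟩
  have hnest : ∀ L, IsLeaf (Δ.erase G) L → NestedTraces (Δ.erase G) L :=
    fun L hL => ih _ (erase_ssubset hGΔ) hg' hL
  exact (hnest F (hg.isLeaf_erase hg' hnest hFFs hGGs hFG)).of_erase hdom

end IsGrafted

end

theorem grafted_embedded_intersections_general (Δ Fs Gs : Finset (Finset α))
    (hgraft : IsGrafted Δ Fs Gs) (F : Finset α) (hF : IsLeaf Δ F)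
    (H H' : Finset α) (hH : H ∈ Δ) (hH' : H' ∈ Δ) :
    H ∩ F ⊆ H' ∩ F ∨ H' ∩ F ⊆ H ∩ F := by
  simpa only [inter_comm _ F] using hgraft.nestedTraces hF H hH H' hH'

/-- In a grafted simplicial complex, the facets meeting a fixed leaf `F`
have nested intersections with `F`. -/
theorem grafted_embedded_intersections (Δ Fs Gs : Finset (Finset α))
    (hgraft : IsGrafted Δ Fs Gs) (F : Finset α) (hF : IsLeaf Δ F)
    (H H' : Finset α) (hH : H ∈ Δ) (hH' : H' ∈ Δ)
    (hHF : H ≠ F) (hH'F : H' ≠ F)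
    (hHmeet : (H ∩ F).Nonempty) (hH'meet : (H' ∩ F).Nonempty) :
    H ∩ F ⊆ H' ∩ F ∨ H' ∩ F ⊆ H ∩ F :=
  grafted_embedded_intersections_general Δ Fs Gs hgraft F hF H H' hH hH'
end
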